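/- arXiv:2011.02405 — 6 statements merged into one kernel-verified Lean document; each statement's English description precedes it below -/
import Mathlib

section
/- Let X = ℝ × ℤ(2), let n ≥ 2, and let b_1,…,b_n be strictly positive real numbers. Let μ_1,…,μ_n be probability measures on X and suppose that Measure.map (x ↦ (∑_j x_j, ∑_j b_j•x_j)) (⊗_j μ_j) = Measure.map (x ↦ (∑_j x_j, −∑_j b_j•x_j)) (⊗_j μ_j). Then for every j there exists x_j ∈ X such that the shifted measure μ_j * δ_{−x_j} is concentrated on the subgroup {0} × ℤ(2), i.e. (μ_j * δ_{−x_j})({0} × ℤ(2)) = 1. -/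
open MeasureTheory Filter Topology Complex

/-!
Only the `ℝ`-components matter. Integrating the symmetry against `exp (i (s p.1 + u q.1))`
gives `∏ f_j (s + u b_j) = ∏ f_j (s - u b_j)` for the characteristic functions `f_j` of the
`ℝ`-marginals. Near `0` the functions `ψ_j = log ‖f_j‖ ≤ 0 = ψ_j 0` then satisfy
`∑ ψ_j (s + u b_j) = ∑ ψ_j (s - u b_j)`; integrating in `s` over `[0, T]` and differentiating
at `u = 0` yields `∑ b_j ψ_j T = 0`, so `‖f_j‖ = 1` near `0` because every `b_j > 0`.
Finally `‖f (t)‖ = 1` forces `x - y ∈ (2π/t) ℤ` for almost all pairs of points, and for the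
incommensurable `t` and `t √2` this means `x = y`: each marginal is a point mass.
-/

theorem hasDerivAt_intervalIntegral_comp_add_mul {ψ : ℝ → ℝ} (hψ : Continuous ψ)
    (a T b u : ℝ) :
    HasDerivAt (fun v => ∫ s in a..T, ψ (s + v * b))
      (b * (ψ (T + u * b) - ψ (a + u * b))) u := by
  set G : ℝ → ℝ := fun x => ∫ s in (0 : ℝ)..x, ψ s
  have hG : ∀ c : ℝ, HasDerivAt (fun v => G (c + v * b)) (ψ (c + u * b) * b) u := fun c =>
    (hψ.integral_hasStrictDerivAt 0 _).hasDerivAt.comp u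
      (((hasDerivAt_id u).mul_const b).const_add c |>.congr_deriv (one_mul b))
  have hshift : (fun v => ∫ s in a..T, ψ (s + v * b)) = fun v => G (T + v * b) - G (a + v * b) :=
    funext fun v => by
      rw [intervalIntegral.integral_comp_add_right,
        intervalIntegral.integral_interval_sub_left (hψ.intervalIntegrable _ _)
          (hψ.intervalIntegrable _ _)]
  rw [hshift, mul_sub, mul_comm b, mul_comm b]
  exact (hG T).sub (hG a)

theorem eventually_eq_of_sum_comp_add_mul_eq_sum_comp_sub_mul {ι : Type*} [Fintype ι]
    {ψ : ι → ℝ → ℝ} {b : ι → ℝ} (hψ : ∀ j, Continuous (ψ j)) (hb : ∀ j, 0 < b j)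
    (hmax : ∀ j t, ψ j t ≤ ψ j 0)
    (h : ∀ᶠ p : ℝ × ℝ in 𝓝 0, ∑ j, ψ j (p.1 + p.2 * b j) = ∑ j, ψ j (p.1 - p.2 * b j)) :
    ∀ᶠ t in 𝓝 0, ∀ j, ψ j t = ψ j 0 := by
  obtain ⟨ε, hε, hball⟩ := Metric.eventually_nhds_iff.1 h
  refine Metric.eventually_nhds_iff.2 ⟨ε, hε, fun T hT => ?_⟩
  rw [Real.dist_0_eq_abs] at hT
  set F : (ι → ℝ) → ℝ → ℝ := fun c u => ∑ j, ∫ s in (0 : ℝ)..T, ψ j (s + u * c j)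
  have hF : ∀ c, HasDerivAt (F c) (∑ j, c j * (ψ j T - ψ j 0)) 0 := fun c => by
    simpa only [zero_mul, add_zero, zero_add] using HasDerivAt.fun_sum (u := Finset.univ)
      fun j _ => hasDerivAt_intervalIntegral_comp_add_mul (hψ j) 0 T (c j) 0
  have hFeq : F b =ᶠ[𝓝 0] F (-b) := by
    refine Metric.eventually_nhds_iff.2 ⟨ε, hε, fun u hu => ?_⟩
    rw [Real.dist_0_eq_abs] at hu
    have hint : ∀ c : ι → ℝ, ∀ j ∈ Finset.univ,
        IntervalIntegrable (fun s => ψ j (s + u * c j)) volume 0 T := fun c j _ =>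
      ((hψ j).comp (continuous_add_const _)).intervalIntegrable _ _
    simp only [F]
    rw [← intervalIntegral.integral_finsetSum (hint b),
      ← intervalIntegral.integral_finsetSum (hint (-b))]
    refine intervalIntegral.integral_congr fun s hs => ?_
    have hs' : |s| < ε := by
      simpa using (Set.abs_sub_left_of_mem_uIcc hs).trans_lt (by simpa using hT)
    simpa [sub_eq_add_neg] using hball (y := (s, u)) (by
      rw [Prod.dist_eq]; simpa [Real.dist_0_eq_abs] using ⟨hs', hu⟩)
  have hsum : ∑ j, b j * (ψ j T - ψ j 0) = 0 := by
    have := (hF b).unique ((hF (-b)).congr_of_eventuallyEq hFeq)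
    simp only [Pi.neg_apply, neg_mul, Finset.sum_neg_distrib] at this
    linarith
  intro j
  have hterm := (Finset.sum_eq_zero_iff_of_nonpos fun i _ =>
    mul_nonpos_of_nonneg_of_nonpos (hb i).le (sub_nonpos.2 (hmax i T))).1 hsum j
      (Finset.mem_univ j)
  exact sub_eq_zero.1 ((mul_eq_zero.1 hterm).resolve_left (hb j).ne')

theorem eventually_eq_one_of_prod_comp_add_mul_eq_prod_comp_sub_mul {ι : Type*} [Fintype ι]
    {φ : ι → ℝ → ℝ} {b : ι → ℝ} (hφ : ∀ j, Continuous (φ j)) (hb : ∀ j, 0 < b j)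
    (h0 : ∀ j, φ j 0 = 1) (hle : ∀ j t, φ j t ≤ 1)
    (h : ∀ s u, ∏ j, φ j (s + u * b j) = ∏ j, φ j (s - u * b j)) :
    ∀ᶠ t in 𝓝 0, ∀ j, φ j t = 1 := by
  -- `log ∘ max (1/2)` is continuous everywhere and agrees with `log` where `φ j` is near `1`.
  set ψ : ι → ℝ → ℝ := fun j t => Real.log (max (φ j t) (1 / 2))
  have hψ0 : ∀ j, ψ j 0 = 0 := fun j => by
    simp only [ψ, h0, max_eq_left (by norm_num : (1 / 2 : ℝ) ≤ 1), Real.log_one]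
  have hψ : ∀ j, Continuous (ψ j) := fun j =>
    ((hφ j).max continuous_const).log fun t => (lt_of_lt_of_le (by norm_num) (le_max_right _ _)).ne'
  have hmax : ∀ j t, ψ j t ≤ ψ j 0 := fun j t => by
    rw [hψ0]
    exact Real.log_nonpos (by positivity) (max_le (hle j t) (by norm_num))
  have hnear : ∀ c : ι → ℝ, ∀ᶠ p : ℝ × ℝ in 𝓝 0, ∀ j, 1 / 2 < φ j (p.1 + p.2 * c j) := fun c =>
    eventually_all.2 fun j => by
      have hcont : Continuous fun p : ℝ × ℝ => φ j (p.1 + p.2 * c j) := by fun_prop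
      refine (hcont.tendsto 0).eventually_const_lt ?_
      norm_num [h0 j]
  have hlog : ∀ x : ι → ℝ, (∀ j, 1 / 2 < φ j (x j)) →
      ∑ j, ψ j (x j) = Real.log (∏ j, φ j (x j)) := fun x hx => by
    rw [Real.log_prod fun j _ => (lt_trans (by norm_num) (hx j)).ne']
    exact Finset.sum_congr rfl fun j _ => by simp only [ψ, max_eq_left (hx j).le]
  have hψeq := eventually_eq_of_sum_comp_add_mul_eq_sum_comp_sub_mul hψ hb hmax (by
    filter_upwards [hnear b, hnear (-b)] with p hadd hsub
    simp only [Pi.neg_apply, mul_neg, ← sub_eq_add_neg] at hsub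
    rw [hlog _ hadd, hlog _ hsub, h])
  filter_upwards [hψeq] with t ht j
  have hmax_eq : max (φ j t) (1 / 2) = 1 := by
    rw [← Real.exp_log (by positivity : 0 < max (φ j t) (1 / 2))]
    simpa only [ψ, hψ0, Real.exp_zero] using congrArg Real.exp (ht j)
  rcases max_eq_iff.1 hmax_eq with h | h
  · exact h.1
  · norm_num at h

theorem ae_exists_int_of_integral_exp_mul_I_eq_one {α : Type*} [MeasurableSpace α]
    {ρ : Measure α} [IsProbabilityMeasure ρ] {f : α → ℝ} (hf : Measurable f)
    (h : ∫ x, exp (f x * I) ∂ρ = 1) : ∀ᵐ x ∂ρ, ∃ k : ℤ, f x = k * (2 * Real.pi) := by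
  have hcos_int : Integrable (fun x => Real.cos (f x)) ρ :=
    (integrable_const (1 : ℝ)).mono' (Real.measurable_cos.comp hf).aestronglyMeasurable
      (Eventually.of_forall fun x => by simpa using Real.abs_cos_le_one (f x))
  have hexp_int : Integrable (fun x => exp (f x * I)) ρ :=
    (integrable_const (1 : ℝ)).mono' (by fun_prop)
      (Eventually.of_forall fun x => (norm_exp_ofReal_mul_I (f x)).le)
  have hcos : ∫ x, Real.cos (f x) ∂ρ = 1 := by
    simpa [exp_ofReal_mul_I_re] using (integral_re hexp_int).trans (congrArg re h)
  have hzero : ∫ x, (1 - Real.cos (f x)) ∂ρ = 0 := by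
    rw [integral_sub (integrable_const 1) hcos_int, hcos]
    simp
  filter_upwards [(integral_eq_zero_iff_of_nonneg (fun x => sub_nonneg.2 (Real.cos_le_one (f x)))
    ((integrable_const 1).sub hcos_int)).1 hzero] with x hx
  obtain ⟨k, hk⟩ := (Real.cos_eq_one_iff _).1 (sub_eq_zero.1 hx).symm
  exact ⟨k, hk.symm⟩

theorem integral_exp_mul_sub_prod_self (ν : Measure ℝ) [IsProbabilityMeasure ν] (t : ℝ) :
    ∫ p, exp ((t * (p.1 - p.2) : ℝ) * I) ∂ν.prod ν = (‖charFun ν t‖ ^ 2 : ℝ) := by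
  have hsplit : ∀ p : ℝ × ℝ, exp ((t * (p.1 - p.2) : ℝ) * I)
      = exp (t * p.1 * I) * exp (((-t : ℝ) : ℂ) * p.2 * I) := fun p => by
    rw [← exp_add]; congr 1; push_cast; ring
  simp_rw [hsplit]
  rw [integral_prod_mul (fun x : ℝ => exp (t * x * I)) (fun y : ℝ => exp ((-t : ℝ) * y * I)),
    ← charFun_apply_real, ← charFun_apply_real, charFun_neg, mul_conj, normSq_eq_norm_sq]

theorem ae_exists_int_of_norm_charFun_eq_one {ν : Measure ℝ} [IsProbabilityMeasure ν] {t : ℝ}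
    (ht : ‖charFun ν t‖ = 1) :
    ∀ᵐ p ∂ν.prod ν, ∃ k : ℤ, t * (p.1 - p.2) = k * (2 * Real.pi) :=
  ae_exists_int_of_integral_exp_mul_I_eq_one (by fun_prop)
    (by rw [integral_exp_mul_sub_prod_self, ht]; simp)

theorem eq_zero_of_mul_and_mul_sqrt_two_eq_int_mul_two_pi {t x : ℝ} (ht : t ≠ 0) {k m : ℤ}
    (hk : t * x = k * (2 * Real.pi)) (hm : (t * √2) * x = m * (2 * Real.pi)) : x = 0 := by
  have hkm : (k : ℝ) * √2 = m := by
    have h2pi : 2 * Real.pi ≠ 0 := by positivity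
    apply mul_right_cancel₀ h2pi
    rw [← hm, mul_right_comm, ← hk]; ring
  have hk0 : k = 0 := by
    by_contra hk0
    exact (irrational_sqrt_two.intCast_mul hk0).ne_int m hkm
  simpa [hk0, ht] using hk

theorem exists_measure_singleton_eq_one_of_ae_fst_eq_snd {α : Type*} [MeasurableSpace α]
    [MeasurableEq α] {ν : Measure α} [IsProbabilityMeasure ν]
    (h : ∀ᵐ p ∂ν.prod ν, p.1 = p.2) : ∃ c, ν {c} = 1 := by
  have hdiag : MeasurableSet {p : α × α | p.1 = p.2} := measurableSet_diagonal
  have hoff : ∫⁻ x, ν (Prod.mk x ⁻¹' {p : α × α | p.1 = p.2}ᶜ) ∂ν = 0 := by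
    rw [← Measure.prod_apply hdiag.compl]
    exact ae_iff.1 h
  obtain ⟨c, hc⟩ :=
    ((lintegral_eq_zero_iff (measurable_measure_prodMk_left hdiag.compl)).1 hoff).exists
  have hsection : Prod.mk c ⁻¹' {p : α × α | p.1 = p.2}ᶜ = {c}ᶜ := by
    ext y
    simp [eq_comm]
  refine ⟨c, (prob_compl_eq_zero_iff (measurableSet_singleton c)).1 ?_⟩
  simpa [hsection] using hc

theorem integral_exp_sum_mul_comp_pi {ι α : Type*} [Fintype ι] [MeasurableSpace α]
    (μ : ι → Measure α) [∀ j, IsProbabilityMeasure (μ j)] {f : α → ℝ} (hf : Measurable f)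
    (c : ι → ℝ) :
    ∫ x, exp ((∑ j, c j * f (x j) : ℝ) * I) ∂Measure.pi μ = ∏ j, charFun ((μ j).map f) (c j) := by
  have hchar : ∀ j, charFun ((μ j).map f) (c j) = ∫ a, exp ((c j * f a : ℝ) * I) ∂μ j := fun j => by
    rw [charFun_apply_real, integral_map hf.aemeasurable (by fun_prop)]
    push_cast
    rfl
  simp_rw [hchar, ← integral_fintype_prod_eq_prod, ← exp_sum, ← Finset.sum_mul]
  push_cast
  rfl

theorem prod_charFun_map_fst_add_mul_eq_prod_sub_mul {ι : Type*} [Fintype ι] (b : ι → ℝ)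
    (μ : ι → Measure (ℝ × ZMod 2)) [∀ j, IsProbabilityMeasure (μ j)]
    (hsym :
      Measure.map (fun x : ι → ℝ × ZMod 2 =>
          (∑ j, x j, ∑ j, ((b j * (x j).1, (x j).2) : ℝ × ZMod 2))) (Measure.pi μ) =
      Measure.map (fun x : ι → ℝ × ZMod 2 =>
          (∑ j, x j, -∑ j, ((b j * (x j).1, (x j).2) : ℝ × ZMod 2))) (Measure.pi μ))
    (s u : ℝ) :
    ∏ j, charFun ((μ j).map Prod.fst) (s + u * b j) =
      ∏ j, charFun ((μ j).map Prod.fst) (s - u * b j) := by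
  set g : (ℝ × ZMod 2) × (ℝ × ZMod 2) → ℂ := fun y => exp ((s * y.1.1 + u * y.2.1 : ℝ) * I)
  have hg : Measurable g := by fun_prop
  have hint := congrArg (fun m => ∫ y, g y ∂m) hsym
  rw [integral_map (by fun_prop) hg.aestronglyMeasurable,
    integral_map (by fun_prop) hg.aestronglyMeasurable] at hint
  rw [← integral_exp_sum_mul_comp_pi μ measurable_fst,
    ← integral_exp_sum_mul_comp_pi μ measurable_fst]
  convert hint using 6 with x x <;>
    simp only [Prod.fst_sum, Prod.fst_neg, Finset.mul_sum, ← Finset.sum_neg_distrib,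
      ← Finset.sum_add_distrib] <;>
    exact Finset.sum_congr rfl fun j _ => by ring

theorem exists_measure_singleton_eq_one_of_eventually_norm_charFun_eq_one {ν : Measure ℝ}
    [IsProbabilityMeasure ν] (h : ∀ᶠ t in 𝓝 0, ‖charFun ν t‖ = 1) : ∃ c, ν {c} = 1 := by
  obtain ⟨ε, hε, hball⟩ := Metric.eventually_nhds_iff.1 h
  have hsqrt : √2 < 2 := by
    rw [Real.sqrt_lt' two_pos]; norm_num
  have ht : ε / 2 ≠ 0 := by positivity
  have h₁ := ae_exists_int_of_norm_charFun_eq_one (hball (y := ε / 2) (by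
    rw [Real.dist_0_eq_abs, abs_of_pos (by positivity)]; linarith))
  have h₂ := ae_exists_int_of_norm_charFun_eq_one (hball (y := ε / 2 * √2) (by
    rw [Real.dist_0_eq_abs, abs_of_pos (by positivity)]; nlinarith))
  refine exists_measure_singleton_eq_one_of_ae_fst_eq_snd ?_
  filter_upwards [h₁, h₂] with p ⟨k, hk⟩ ⟨m, hm⟩
  exact sub_eq_zero.1 (eq_zero_of_mul_and_mul_sqrt_two_eq_int_mul_two_pi ht hk hm)

theorem conv_dirac_neg_apply_fst_eq_zero {G : Type*} [AddGroup G] [MeasurableSpace G]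
    [MeasurableAdd₂ (ℝ × G)] (μ : Measure (ℝ × G)) [SFinite μ] (c : ℝ) :
    (μ ∗ Measure.dirac (-(c, 0))) {p | p.1 = 0} = μ.map Prod.fst {c} := by
  have hS : MeasurableSet {p : ℝ × G | p.1 = 0} := measurable_fst (measurableSet_singleton 0)
  rw [Measure.conv_dirac, Measure.map_apply (measurable_add_const _) hS,
    Measure.map_apply measurable_fst (measurableSet_singleton c)]
  congr 1
  ext p
  simp [add_neg_eq_zero]

theorem heyde_R_Z2_positive_coefficients_general (n : ℕ) (b : Fin n → ℝ)
    (hb : ∀ j, 0 < b j)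
    (μ : Fin n → Measure (ℝ × ZMod 2)) (hμ : ∀ j, IsProbabilityMeasure (μ j))
    (hsym :
      Measure.map (fun x : Fin n → ℝ × ZMod 2 =>
          (∑ j, x j, ∑ j, ((b j * (x j).1, (x j).2) : ℝ × ZMod 2))) (Measure.pi μ) =
      Measure.map (fun x : Fin n → ℝ × ZMod 2 =>
          (∑ j, x j, -∑ j, ((b j * (x j).1, (x j).2) : ℝ × ZMod 2))) (Measure.pi μ)) :
    ∀ j, ∃ x : ℝ × ZMod 2,
      Measure.conv (μ j) (Measure.dirac (-x)) {p : ℝ × ZMod 2 | p.1 = 0} = 1 := by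
  have := hμ
  have hν : ∀ j, IsProbabilityMeasure ((μ j).map Prod.fst) := fun j =>
    Measure.isProbabilityMeasure_map measurable_fst.aemeasurable
  have hchar := prod_charFun_map_fst_add_mul_eq_prod_sub_mul b μ hsym
  have hone : ∀ᶠ t in 𝓝 0, ∀ j, ‖charFun ((μ j).map Prod.fst) t‖ = 1 :=
    eventually_eq_one_of_prod_comp_add_mul_eq_prod_comp_sub_mul
      (fun j => continuous_charFun.norm) hb (fun j => by simp) (fun j => norm_charFun_le_one)
      (fun s u => by simp only [← norm_prod, hchar s u])
  intro j
  obtain ⟨c, hc⟩ :=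
    exists_measure_singleton_eq_one_of_eventually_norm_charFun_eq_one (hone.mono fun t ht => ht j)
  exact ⟨(c, 0), by rw [conv_dirac_neg_apply_fst_eq_zero, hc]⟩

/-- Corollary to Heyde's theorem for `ℝ × ZMod 2`: if all coefficients of `L₂` are
positive (and those of `L₁` equal `1`), then shifts of the `μ_j` are concentrated
on the subgroup `{0} × ZMod 2`. -/
theorem heyde_R_Z2_positive_coefficients (n : ℕ) (hn : 2 ≤ n) (b : Fin n → ℝ)
    (hb : ∀ j, 0 < b j)
    (μ : Fin n → Measure (ℝ × ZMod 2)) (hμ : ∀ j, IsProbabilityMeasure (μ j))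
    (hsym :
      Measure.map (fun x : Fin n → ℝ × ZMod 2 =>
          (∑ j, x j, ∑ j, ((b j * (x j).1, (x j).2) : ℝ × ZMod 2))) (Measure.pi μ) =
      Measure.map (fun x : Fin n → ℝ × ZMod 2 =>
          (∑ j, x j, -∑ j, ((b j * (x j).1, (x j).2) : ℝ × ZMod 2))) (Measure.pi μ)) :
    ∀ j, ∃ x : ℝ × ZMod 2,
      Measure.conv (μ j) (Measure.dirac (-x)) {p : ℝ × ZMod 2 | p.1 = 0} = 1 :=
  heyde_R_Z2_positive_coefficients_general n b hb μ hμ hsym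
end

section
/- Let σ, σ′ ≥ 0 and β, β′, κ ∈ ℝ, and define f : ℝ × ℤ(2) → ℂ by f(s,0) = exp(−σ·s² + i·β·s) and f(s,1) = κ·exp(−σ′·s² + i·β′·s). Then: (i) there exist finite measures ν⁺, ν⁻ on X = ℝ × ℤ(2) such that f(s,l) = ∫ exp(i·s·t)·(−1)^(k·l) dν⁺(t,k) − ∫ exp(i·s·t)·(−1)^(k·l) dν⁻(t,k) for all (s,l) ∈ ℝ × ℤ(2), i.e. f is the characteristic function of a finite signed measure on X; (ii) if κ ≠ 0, then there exists a probability measure μ on X with μ̂ = f if and only if either (0 < σ′ < σ and 0 < |κ| ≤ √(σ′/σ)·exp(−(β−β′)²/(4(σ−σ′)))) or (σ = σ′, β = β′ and |κ| ≤ 1). -/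
open MeasureTheory Complex

/-- Characteristic function of a (finite) measure on `ℝ × ZMod 2`:
`ν̂(s,l) = ∫ exp(i·s·t)·(−1)^(k·l) dν(t,k)`. -/
noncomputable def charFn2 (ν : Measure (ℝ × ZMod 2)) (s : ℝ) (l : ZMod 2) : ℂ :=
  ∫ x, Complex.exp (Complex.I * s * x.1) * (-1 : ℂ) ^ (x.2 * l).val ∂ν

/-- The condition on the parameters in the definition of the class `Θ`. -/
def ThetaCond (σ σ' β β' κ : ℝ) : Prop :=
  (0 < σ' ∧ σ' < σ ∧ 0 < |κ| ∧
    |κ| ≤ Real.sqrt (σ' / σ) * Real.exp (-(β - β') ^ 2 / (4 * (σ - σ')))) ∨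
  (σ = σ' ∧ β = β' ∧ |κ| ≤ 1)

/-!
A measure on `ℝ × ZMod 2` is a pair of measures `μ₀, μ₁` on the two sheets `ℝ × {k}`, and its
characteristic function is `μ̂₀(s) + (-1)^l μ̂₁(s)`. With `g, h` the characteristic functions of
`N(β, 2σ)` and `N(β', 2σ')`, the function `f` corresponds to the pair `((g + κh)/2, (g - κh)/2)`,
which is a pair of differences of finite measures in any case. By uniqueness of characteristic
functions, both members of the pair are characteristic functions of measures iff
`|κ| • N(β', 2σ') ≤ N(β, 2σ)`. For positive variances this is a pointwise inequality between the
densities, whose ratio is `√(σ'/σ)` times the exponential of a quadratic in `t`; its infimum is at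
least `|κ|` exactly under the `Θ`-condition. Vanishing variances give Dirac masses, compared atom
by atom.
-/

open ProbabilityTheory NNReal ENNReal Filter Topology
open scoped Real

section CharFun

variable {E : Type*} [NormedAddCommGroup E] [InnerProductSpace ℝ E] [MeasurableSpace E]
  {μ ν G H : Measure E}

lemma charFun_smul_measure (c : ℝ≥0) (t : E) : charFun (c • μ) t = c * charFun μ t := by
  rw [charFun_apply, integral_smul_nnreal_measure, NNReal.smul_def, Complex.real_smul]
  rfl

lemma charFun_add_measure [OpensMeasurableSpace E] [IsFiniteMeasure μ] [IsFiniteMeasure ν]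
    (t : E) :
    charFun (μ + ν) t = charFun μ t + charFun ν t := by
  simp only [charFun_eq_integral_innerProbChar]
  exact integral_add_measure (BoundedContinuousFunction.integrable μ _)
    (BoundedContinuousFunction.integrable ν _)

lemma exists_charFun_sub_eq_half_add [OpensMeasurableSpace E] [IsFiniteMeasure G]
    [IsFiniteMeasure H] (c : ℝ) :
    ∃ P M : Measure E, IsFiniteMeasure P ∧ IsFiniteMeasure M ∧
      ∀ t, charFun P t - charFun M t = (charFun G t + c * charFun H t) / 2 := by
  refine ⟨(1 / 2 : ℝ≥0) • G + (c.toNNReal / 2) • H, ((-c).toNNReal / 2) • H, inferInstance,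
    inferInstance, fun t ↦ ?_⟩
  have hc : (c.toNNReal : ℂ) - ((-c).toNNReal : ℂ) = c := by
    have : (c.toNNReal : ℝ) - (-c).toNNReal = c := by
      rw [Real.coe_toNNReal', Real.coe_toNNReal', max_zero_sub_max_neg_zero_eq_self]
    exact_mod_cast this
  simp only [charFun_add_measure, charFun_smul_measure]
  push_cast
  linear_combination charFun H t / 2 * hc

variable [BorelSpace E] [SecondCountableTopology E] [CompleteSpace E] [IsFiniteMeasure G]
  [IsFiniteMeasure H]

lemma smul_le_of_charFun_add_eq {ν : Measure E} [IsFiniteMeasure ν] (c : ℝ≥0)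
    (h : ∀ t, charFun ν t + c * charFun H t = charFun G t) : c • H ≤ G := by
  have : ν + c • H = G := Measure.ext_of_charFun <| funext fun t ↦ by
    rw [charFun_add_measure, charFun_smul_measure, h]
  exact this ▸ Measure.le_add_left le_rfl

lemma exists_charFun_eq_half_add_iff (κ : ℝ) :
    (∃ A B : Measure E, IsFiniteMeasure A ∧ IsFiniteMeasure B ∧ ∀ t,
      charFun A t = (charFun G t + κ * charFun H t) / 2 ∧
        charFun B t = (charFun G t - κ * charFun H t) / 2) ↔
      Real.nnabs κ • H ≤ G := by
  have hκ : ((Real.nnabs κ : ℝ≥0) : ℂ) = κ ∨ ((Real.nnabs κ : ℝ≥0) : ℂ) = -κ := by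
    rcases abs_choice κ with h | h <;> simp [h]
  constructor
  · rintro ⟨A, B, hA, hB, hAB⟩
    rcases hκ with hκ | hκ
    · refine smul_le_of_charFun_add_eq (ν := (2 : ℝ≥0) • B) _ fun t ↦ ?_
      rw [charFun_smul_measure, (hAB t).2, hκ]
      push_cast
      ring
    · refine smul_le_of_charFun_add_eq (ν := (2 : ℝ≥0) • A) _ fun t ↦ ?_
      rw [charFun_smul_measure, (hAB t).1, hκ]
      push_cast
      ring
  · intro h
    have hD : ∀ t, charFun (G - Real.nnabs κ • H) t = charFun G t - Real.nnabs κ * charFun H t :=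
      fun t ↦ by
        rw [eq_sub_iff_add_eq, ← charFun_smul_measure, ← charFun_add_measure,
          Measure.sub_add_cancel_of_le h]
    have : IsFiniteMeasure (G - Real.nnabs κ • H) := isFiniteMeasure_of_le _ Measure.sub_le
    rcases hκ with hκ | hκ
    · refine ⟨(1 / 2 : ℝ≥0) • (G + Real.nnabs κ • H), (1 / 2 : ℝ≥0) • (G - Real.nnabs κ • H),
        inferInstance, inferInstance, fun t ↦ ⟨?_, ?_⟩⟩ <;>
      simp only [charFun_smul_measure, charFun_add_measure, hD, hκ] <;> push_cast <;> ring
    · refine ⟨(1 / 2 : ℝ≥0) • (G - Real.nnabs κ • H), (1 / 2 : ℝ≥0) • (G + Real.nnabs κ • H),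
        inferInstance, inferInstance, fun t ↦ ⟨?_, ?_⟩⟩ <;>
      simp only [charFun_smul_measure, charFun_add_measure, hD, hκ] <;> push_cast <;> ring

end CharFun

lemma withDensity_le_withDensity_iff {X : Type*} [TopologicalSpace X] [MeasurableSpace X]
    [OpensMeasurableSpace X] {μ : Measure X} [SigmaFinite μ] [μ.IsOpenPosMeasure]
    {f g : X → ℝ≥0∞} (hf : Continuous f) (hg : Continuous g) :
    μ.withDensity f ≤ μ.withDensity g ↔ f ≤ g := by
  refine ⟨fun h ↦ ?_, fun h ↦ withDensity_mono (ae_of_all _ h)⟩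
  have hae : ∀ᵐ x ∂μ, f x ≤ g x := ae_le_of_forall_setLIntegral_le_of_sigmaFinite hf.measurable
    fun s hs _ ↦ by simpa only [withDensity_apply _ hs] using h s
  intro x
  have := (isClosed_le hf hg).closure_eq ▸ (Measure.dense_of_ae hae).closure_eq
  exact Set.eq_univ_iff_forall.1 this x

lemma charFun_gaussianReal_two_mul {σ : ℝ} (hσ : 0 ≤ σ) (β s : ℝ) :
    charFun (gaussianReal β (2 * σ).toNNReal) s = cexp (-σ * s ^ 2 + I * β * s) := by
  rw [charFun_gaussianReal, Real.coe_toNNReal _ (by positivity)]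
  congr 1
  push_cast
  ring

lemma continuous_gaussianPDF (μ : ℝ) (v : ℝ≥0) : Continuous (gaussianPDF μ v) :=
  ENNReal.continuous_ofReal.comp (by unfold gaussianPDFReal; fun_prop)

lemma gaussianPDFReal_two_mul_eq {σ σ' : ℝ} (hσ : 0 < σ) (hσ' : 0 < σ') (β β' t : ℝ) :
    gaussianPDFReal β (2 * σ).toNNReal t =
      √(σ' / σ) * Real.exp ((t - β') ^ 2 / (4 * σ') - (t - β) ^ 2 / (4 * σ)) *
        gaussianPDFReal β' (2 * σ').toNNReal t := by
  simp only [gaussianPDFReal, Real.coe_toNNReal _ (by positivity : 0 ≤ 2 * σ),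
    Real.coe_toNNReal _ (by positivity : 0 ≤ 2 * σ')]
  have hsqrt : √(σ' / σ) * (√(2 * π * (2 * σ')))⁻¹ = (√(2 * π * (2 * σ)))⁻¹ := by
    rw [← Real.sqrt_inv, ← Real.sqrt_mul (by positivity), ← Real.sqrt_inv]
    congr 1
    field_simp
  have hexp : Real.exp ((t - β') ^ 2 / (4 * σ') - (t - β) ^ 2 / (4 * σ)) *
      Real.exp (-(t - β') ^ 2 / (2 * (2 * σ'))) = Real.exp (-(t - β) ^ 2 / (2 * (2 * σ))) := by
    rw [← Real.exp_add]
    congr 1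
    ring
  rw [← hsqrt, ← hexp]
  ring

lemma sq_div_sub_sq_div_eq {σ σ' : ℝ} (hσ : σ ≠ 0) (hσ' : σ' ≠ 0) (hne : σ ≠ σ') (β β' t : ℝ) :
    (t - β') ^ 2 / (4 * σ') - (t - β) ^ 2 / (4 * σ) =
      (σ - σ') / (4 * σ * σ') * (t - (σ * β' - σ' * β) / (σ - σ')) ^ 2
        - (β - β') ^ 2 / (4 * (σ - σ')) := by
  have : σ - σ' ≠ 0 := sub_ne_zero.2 hne
  field_simp
  ring

lemma thetaCond_iff_forall_le {σ σ' : ℝ} (hσ : 0 < σ) (hσ' : 0 < σ') {κ : ℝ} (hκ : κ ≠ 0)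
    (β β' : ℝ) :
    ThetaCond σ σ' β β' κ ↔
      ∀ t, |κ| ≤ √(σ' / σ) * Real.exp ((t - β') ^ 2 / (4 * σ') - (t - β) ^ 2 / (4 * σ)) := by
  have hκ' : 0 < |κ| := abs_pos.2 hκ
  constructor
  · rintro (⟨-, hlt, -, hle⟩ | ⟨rfl, rfl, hle⟩) t
    · refine hle.trans (mul_le_mul_of_nonneg_left (Real.exp_le_exp.2 ?_) (Real.sqrt_nonneg _))
      rw [sq_div_sub_sq_div_eq hσ.ne' hσ'.ne' hlt.ne' β β' t, neg_div]
      have : 0 ≤ (σ - σ') / (4 * σ * σ') := div_nonneg (by linarith) (by positivity)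
      nlinarith [sq_nonneg (t - (σ * β' - σ' * β) / (σ - σ'))]
    · simpa [div_self hσ.ne'] using hle
  intro h
  rcases lt_trichotomy σ σ' with hlt | rfl | hgt
  · -- the exponent is a concave parabola, so the right-hand side tends to `0`
    have ha : (σ - σ') / (4 * σ * σ') < 0 := div_neg_of_neg_of_pos (by linarith) (by positivity)
    have hlim : Tendsto (fun u : ℝ ↦ √(σ' / σ) * Real.exp ((σ - σ') / (4 * σ * σ') * u ^ 2
        - (β - β') ^ 2 / (4 * (σ - σ')))) atTop (𝓝 0) := by
      simpa [sub_eq_add_neg] using ((Real.tendsto_exp_atBot.comp (tendsto_atBot_add_const_right _ _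
        ((tendsto_pow_atTop two_ne_zero).const_mul_atTop_of_neg ha))).const_mul (√(σ' / σ)))
    refine absurd (ge_of_tendsto' hlim fun u ↦ ?_) (not_le.2 hκ')
    have := h (u + (σ * β' - σ' * β) / (σ - σ'))
    rwa [sq_div_sub_sq_div_eq hσ.ne' hσ'.ne' hlt.ne, add_sub_cancel_right] at this
  · by_cases hβ : β = β'
    · subst hβ
      exact Or.inr ⟨rfl, rfl, by simpa [div_self hσ.ne'] using h 0⟩
    · -- the exponent is affine and nonconstant in `t`, so it reaches `log (|κ| / 2)`
      have hβ' : β - β' ≠ 0 := sub_ne_zero.2 hβ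
      have := h ((β + β') / 2 + 2 * σ * Real.log (|κ| / 2) / (β - β'))
      have hQ : ((β + β') / 2 + 2 * σ * Real.log (|κ| / 2) / (β - β') - β') ^ 2 / (4 * σ) -
          ((β + β') / 2 + 2 * σ * Real.log (|κ| / 2) / (β - β') - β) ^ 2 / (4 * σ) =
          Real.log (|κ| / 2) := by
        field_simp
        ring
      rw [hQ, Real.exp_log (by positivity), div_self hσ.ne', Real.sqrt_one, one_mul] at this
      linarith
  · refine Or.inl ⟨hσ', hgt, hκ', ?_⟩
    have := h ((σ * β' - σ' * β) / (σ - σ'))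
    rwa [sq_div_sub_sq_div_eq hσ.ne' hσ'.ne' hgt.ne', sub_self, zero_pow two_ne_zero, mul_zero,
      zero_sub, ← neg_div] at this

lemma smul_gaussianReal_le_gaussianReal_iff_of_pos {σ σ' : ℝ} (hσ : 0 < σ) (hσ' : 0 < σ')
    {κ : ℝ} (hκ : κ ≠ 0) (β β' : ℝ) :
    Real.nnabs κ • gaussianReal β' (2 * σ').toNNReal ≤ gaussianReal β (2 * σ).toNNReal ↔
      ThetaCond σ σ' β β' κ := by
  have hv : ∀ {s : ℝ}, 0 < s → (2 * s).toNNReal ≠ 0 := fun hs ↦ by positivity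
  have hcont : Continuous ((Real.nnabs κ : ℝ≥0∞) • gaussianPDF β' (2 * σ').toNNReal) :=
    (ENNReal.continuous_const_mul ENNReal.coe_ne_top).comp (continuous_gaussianPDF _ _)
  rw [gaussianReal_of_var_ne_zero _ (hv hσ), gaussianReal_of_var_ne_zero _ (hv hσ'),
    ← Measure.coe_nnreal_smul, ← withDensity_smul _ (measurable_gaussianPDF _ _),
    withDensity_le_withDensity_iff hcont (continuous_gaussianPDF _ _),
    thetaCond_iff_forall_le hσ hσ' hκ]
  refine forall_congr' fun t ↦ ?_
  have hpos := gaussianPDFReal_pos β' _ t (hv hσ')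
  rw [Pi.smul_apply, gaussianPDF, gaussianPDF, smul_eq_mul, ← ENNReal.ofReal_coe_nnreal,
    ← ENNReal.ofReal_mul (by positivity),
    ENNReal.ofReal_le_ofReal_iff (gaussianPDFReal_nonneg _ _ _),
    gaussianPDFReal_two_mul_eq hσ hσ', Real.coe_nnabs, mul_le_mul_iff_left₀ hpos]

lemma eq_of_smul_dirac_le_gaussianReal {c : ℝ≥0} (hc : c ≠ 0) {x μ : ℝ} {v : ℝ≥0}
    (h : c • Measure.dirac x ≤ gaussianReal μ v) : v = 0 ∧ x = μ := by
  have hx : (c : ℝ≥0∞) ≤ gaussianReal μ v {x} := by simpa using h {x}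
  have hv : v = 0 := by
    by_contra hv
    have := nullSingletonClass_gaussianReal (μ := μ) hv
    simp_all
  subst hv
  refine ⟨rfl, by_contra fun hxμ ↦ hc ?_⟩
  simpa [Measure.dirac_apply, hxμ] using hx

lemma var_eq_zero_of_smul_gaussianReal_le_dirac {c : ℝ≥0} (hc : c ≠ 0) {x μ : ℝ} {v : ℝ≥0}
    (h : c • gaussianReal μ v ≤ Measure.dirac x) : v = 0 := by
  by_contra hv
  have := nullSingletonClass_gaussianReal (μ := μ) hv
  have hx := h {x}ᶜ
  simp at hx
  exact hc hx

lemma smul_gaussianReal_le_gaussianReal_iff {σ σ' : ℝ} (hσ : 0 ≤ σ) (hσ' : 0 ≤ σ') {κ : ℝ}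
    (hκ : κ ≠ 0) (β β' : ℝ) :
    Real.nnabs κ • gaussianReal β' (2 * σ').toNNReal ≤ gaussianReal β (2 * σ).toNNReal ↔
      ThetaCond σ σ' β β' κ := by
  by_cases hpos : 0 < σ ∧ 0 < σ'
  · exact smul_gaussianReal_le_gaussianReal_iff_of_pos hpos.1 hpos.2 hκ β β'
  have hc : Real.nnabs κ ≠ 0 := by simpa using hκ
  constructor
  · intro h
    -- `N(β, 2σ)` has an atom iff `σ = 0`, so the domination forces both variances to vanish
    obtain rfl : σ' = 0 := by
      by_contra hσ'0
      obtain rfl : σ = 0 := by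
        by_contra hσ0
        exact hpos ⟨hσ.lt_of_ne' hσ0, hσ'.lt_of_ne' hσ'0⟩
      rw [mul_zero, Real.toNNReal_zero, gaussianReal_zero_var] at h
      have := var_eq_zero_of_smul_gaussianReal_le_dirac hc h
      simp at this
      linarith [hσ'.lt_of_ne' hσ'0]
    rw [mul_zero, Real.toNNReal_zero, gaussianReal_zero_var] at h
    obtain ⟨hv, rfl⟩ := eq_of_smul_dirac_le_gaussianReal hc h
    have hσ0 : σ = 0 := by simp at hv; linarith
    subst hσ0
    have hmass : (Real.nnabs κ : ℝ≥0∞) ≤ 1 := by simpa using h Set.univ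
    refine Or.inr ⟨rfl, rfl, ?_⟩
    simpa [← NNReal.coe_le_coe] using ENNReal.coe_le_one_iff.1 hmass
  · rintro (⟨hσ'0, hlt, -⟩ | ⟨rfl, rfl, hle⟩)
    · exact absurd ⟨hσ'0.trans hlt, hσ'0⟩ hpos
    · intro s
      refine mul_le_of_le_one_left zero_le (ENNReal.coe_le_one_iff.2 ?_)
      simpa [← NNReal.coe_le_coe] using hle

noncomputable def fibersMeasure (μ₀ μ₁ : Measure ℝ) : Measure (ℝ × ZMod 2) :=
  μ₀.map (·, 0) + μ₁.map (·, 1)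

instance {μ₀ μ₁ : Measure ℝ} [IsFiniteMeasure μ₀] [IsFiniteMeasure μ₁] :
    IsFiniteMeasure (fibersMeasure μ₀ μ₁) := by
  unfold fibersMeasure
  infer_instance

lemma fibersMeasure_comap (μ : Measure (ℝ × ZMod 2)) :
    fibersMeasure (μ.comap (·, 0)) (μ.comap (·, 1)) = μ := by
  have hrange : Set.range (fun t : ℝ ↦ (t, (0 : ZMod 2))) ∪ Set.range (·, 1) = Set.univ :=
    Set.eq_univ_of_forall fun ⟨t, k⟩ ↦ by fin_cases k; exacts [Or.inl ⟨t, rfl⟩, Or.inr ⟨t, rfl⟩]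
  rw [fibersMeasure, (measurableEmbedding_prod_mk_right _).map_comap,
    (measurableEmbedding_prod_mk_right _).map_comap, ← Measure.restrict_union, hrange,
    Measure.restrict_univ]
  · rw [Set.disjoint_iff]
    rintro _ ⟨⟨t, rfl⟩, ⟨t', h⟩⟩
    simp at h
  · exact (measurableEmbedding_prod_mk_right _).measurableSet_range

lemma integrable_charFn2_integrand (μ : Measure (ℝ × ZMod 2)) [IsFiniteMeasure μ] (s : ℝ)
    (l : ZMod 2) :
    Integrable (fun x : ℝ × ZMod 2 ↦ cexp (I * s * x.1) * (-1 : ℂ) ^ (x.2 * l).val) μ := by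
  refine Integrable.of_bound (by fun_prop) 1 (ae_of_all _ fun x ↦ ?_)
  simp [norm_exp]

lemma charFn2_add (μ ν : Measure (ℝ × ZMod 2)) [IsFiniteMeasure μ] [IsFiniteMeasure ν] (s : ℝ)
    (l : ZMod 2) : charFn2 (μ + ν) s l = charFn2 μ s l + charFn2 ν s l :=
  integral_add_measure (integrable_charFn2_integrand μ s l) (integrable_charFn2_integrand ν s l)

lemma charFn2_map_prodMk (m : Measure ℝ) (j : ZMod 2) (s : ℝ) (l : ZMod 2) :
    charFn2 (m.map (·, j)) s l = charFun m s * (-1 : ℂ) ^ (j * l).val := by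
  rw [charFn2, (measurableEmbedding_prod_mk_right j).integral_map]
  dsimp only
  rw [integral_mul_const, charFun_apply_real]
  simp only [mul_comm I, mul_right_comm _ I]

lemma charFn2_fibersMeasure (μ₀ μ₁ : Measure ℝ) [IsFiniteMeasure μ₀] [IsFiniteMeasure μ₁]
    (s : ℝ) (l : ZMod 2) :
    charFn2 (fibersMeasure μ₀ μ₁) s l = charFun μ₀ s + (-1 : ℂ) ^ l.val * charFun μ₁ s := by
  rw [fibersMeasure, charFn2_add, charFn2_map_prodMk, charFn2_map_prodMk, zero_mul, one_mul,
    ZMod.val_zero, pow_zero, mul_one, mul_comm]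

lemma charFn2_zero_zero (μ : Measure (ℝ × ZMod 2)) : charFn2 μ 0 0 = μ.real Set.univ := by
  simp [charFn2]

lemma exists_isProbabilityMeasure_charFn2_eq_iff {F : ℝ → ZMod 2 → ℂ} {a b : ℝ → ℂ}
    (hF : ∀ s l, F s l = a s + (-1 : ℂ) ^ l.val * b s) (hab : a 0 + b 0 = 1) :
    (∃ μ : Measure (ℝ × ZMod 2), IsProbabilityMeasure μ ∧ ∀ s l, charFn2 μ s l = F s l) ↔
      ∃ A B : Measure ℝ, IsFiniteMeasure A ∧ IsFiniteMeasure B ∧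
        ∀ s, charFun A s = a s ∧ charFun B s = b s := by
  constructor
  · rintro ⟨μ, hμ, hμF⟩
    refine ⟨μ.comap (·, 0), μ.comap (·, 1), inferInstance, inferInstance, fun s ↦ ?_⟩
    have h0 := hμF s 0
    have h1 := hμF s 1
    rw [← fibersMeasure_comap μ, charFn2_fibersMeasure, hF] at h0 h1
    simp only [ZMod.val_zero, ZMod.val_one, pow_zero, pow_one, one_mul, neg_one_mul] at h0 h1
    exact ⟨by linear_combination (h0 + h1) / 2, by linear_combination (h0 - h1) / 2⟩
  · rintro ⟨A, B, hA, hB, hAB⟩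
    have hμF : ∀ s l, charFn2 (fibersMeasure A B) s l = F s l := fun s l ↦ by
      rw [charFn2_fibersMeasure, hF, (hAB s).1, (hAB s).2]
    refine ⟨fibersMeasure A B, isProbabilityMeasure_iff_real.2 ?_, hμF⟩
    have := charFn2_zero_zero (fibersMeasure A B)
    rw [hμF, hF, ZMod.val_zero, pow_zero, one_mul, hab] at this
    exact_mod_cast this.symm

/-- The function `f(s,0) = exp(−σs²+iβs)`, `f(s,1) = κ·exp(−σ′s²+iβ′s)` is the
characteristic function of a finite signed measure on `ℝ × ZMod 2`, and (for `κ ≠ 0`)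
it is the characteristic function of a probability measure iff the `Θ`-condition holds. -/
theorem signed_measure_char_fn_R_Z2 (σ σ' β β' κ : ℝ) (hσ : 0 ≤ σ) (hσ' : 0 ≤ σ')
    (f : ℝ → ZMod 2 → ℂ)
    (hf0 : ∀ s : ℝ, f s 0 = Complex.exp (-(σ : ℂ) * s ^ 2 + Complex.I * β * s))
    (hf1 : ∀ s : ℝ, f s 1 =
      (κ : ℂ) * Complex.exp (-(σ' : ℂ) * s ^ 2 + Complex.I * β' * s)) :
    (∃ νp νm : Measure (ℝ × ZMod 2), IsFiniteMeasure νp ∧ IsFiniteMeasure νm ∧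
      ∀ (s : ℝ) (l : ZMod 2), f s l = charFn2 νp s l - charFn2 νm s l) ∧
    (κ ≠ 0 →
      ((∃ μ : Measure (ℝ × ZMod 2), IsProbabilityMeasure μ ∧
          ∀ (s : ℝ) (l : ZMod 2), charFn2 μ s l = f s l) ↔
        ThetaCond σ σ' β β' κ)) := by
  set G := gaussianReal β (2 * σ).toNNReal
  set H := gaussianReal β' (2 * σ').toNNReal
  have hf : ∀ s l, f s l = (charFun G s + κ * charFun H s) / 2 +
      (-1 : ℂ) ^ l.val * ((charFun G s - κ * charFun H s) / 2) := fun s l ↦ by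
    simp only [G, H, charFun_gaussianReal_two_mul hσ, charFun_gaussianReal_two_mul hσ']
    obtain rfl | rfl : l = 0 ∨ l = 1 := (by decide : ∀ l : ZMod 2, l = 0 ∨ l = 1) l
    · rw [hf0, ZMod.val_zero]
      ring
    · rw [hf1, ZMod.val_one]
      ring
  refine ⟨?_, fun hκ ↦ ?_⟩
  · obtain ⟨P₀, M₀, _, _, h₀⟩ := exists_charFun_sub_eq_half_add (G := G) (H := H) κ
    obtain ⟨P₁, M₁, _, _, h₁⟩ := exists_charFun_sub_eq_half_add (G := G) (H := H) (-κ)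
    refine ⟨fibersMeasure P₀ P₁, fibersMeasure M₀ M₁, inferInstance, inferInstance, fun s l ↦ ?_⟩
    have h₁s := h₁ s
    push_cast at h₁s
    rw [hf, charFn2_fibersMeasure, charFn2_fibersMeasure]
    linear_combination -h₀ s - (-1 : ℂ) ^ l.val * h₁s
  · refine (exists_isProbabilityMeasure_charFn2_eq_iff hf ?_).trans
      ((exists_charFun_eq_half_add_iff κ).trans
        (smul_gaussianReal_le_gaussianReal_iff hσ hσ' hκ β β'))
    simp only [charFun_zero, probReal_univ]
    push_cast
    ring
end

section
/- Let ε > 0, let n ≥ 1, let c_1,…,c_n be pairwise distinct real numbers, and let ψ_1,…,ψ_n : ℝ → ℂ be continuous functions such that ∑_{j=1}^n ψ_j(s_1 + c_j·s_2) = 0 for all real s_1, s_2 with |s_1| < ε and |s_2| < ε. Then the functions ψ_j are polynomials in a neighborhood of zero: there exist δ > 0 and polynomials P_1,…,P_n ∈ ℂ[X] such that ψ_j(s) = P_j(s) for all j and all real s with |s| < δ. -/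
/-!
Mollifying the `ψ j` by bumps of shrinking support preserves the equation on a smaller square,
so it suffices to show that smooth solutions are polynomials of degree `< n`, a bound that does
not depend on the mollifier. For smooth solutions, differentiating along the direction
`(-c_last, 1)` kills the last function and leaves the system `(c j - c_last) • deriv (ψ j)`
of `n - 1` functions, so by induction each `ψ j` with `j ≠ last` is a polynomial of degree `< n`;
then so is `ψ last = -∑ ψ j` (take `s₂ = 0`). Finally, polynomials of degree `< n` on an
infinite set are closed under pointwise limits, since each is the Lagrange interpolant of its
values at `n` fixed nodes.
-/

open Polynomial Filter Topology MeasureTheory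
open scoped ContDiff Convolution

namespace Polynomial

variable {K : Type*} [Field K]

noncomputable def antideriv (Q : K[X]) : K[X] :=
  Q.sum fun i a => C (a / (i + 1)) * X ^ (i + 1)

theorem derivative_antideriv [CharZero K] (Q : K[X]) : derivative (antideriv Q) = Q := by
  conv_rhs => rw [← Q.sum_C_mul_X_pow_eq]
  simp only [antideriv, Polynomial.sum, map_sum, derivative_C_mul_X_pow]
  refine Finset.sum_congr rfl fun i _ => ?_
  rw [Nat.add_sub_cancel, Nat.cast_succ, div_mul_cancel₀ _ (Nat.cast_add_one_ne_zero i)]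

theorem antideriv_mem_degreeLT {Q : K[X]} {d : ℕ} (hQ : Q ∈ degreeLT K d) :
    antideriv Q ∈ degreeLT K (d + 1) := by
  refine Submodule.sum_mem _ fun i hi =>
    mem_degreeLT.2 ((degree_C_mul_X_pow_le _ _).trans_lt ?_)
  have := (le_degree_of_mem_supp i hi).trans_lt (mem_degreeLT.1 hQ)
  exact_mod_cast Nat.succ_lt_succ (by exact_mod_cast this)

end Polynomial

theorem exists_mem_degreeLT_eqOn_of_deriv {f : ℝ → ℂ} (hf : Differentiable ℝ f) {ε : ℝ} {d : ℕ}
    {Q : ℂ[X]} (hQ : Q ∈ degreeLT ℂ d) (hfQ : ∀ s, |s| < ε → deriv f s = Q.eval (s : ℂ)) :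
    ∃ P ∈ degreeLT ℂ (d + 1), ∀ s, |s| < ε → f s = P.eval (s : ℂ) := by
  set P := antideriv Q + C (f 0 - (antideriv Q).eval 0)
  have hP : ∀ s : ℝ, HasDerivAt (fun x : ℝ => P.eval (x : ℂ)) (Q.eval (s : ℂ)) s := fun s => by
    simpa [P, derivative_antideriv] using (P.hasDerivAt (s : ℂ)).comp_ofReal
  refine ⟨P, Submodule.add_mem _ (antideriv_mem_degreeLT hQ) ?_, fun s hs => ?_⟩
  · exact mem_degreeLT.2 ((degree_C_le).trans_lt (by exact_mod_cast Nat.succ_pos d))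
  have hball : ∀ {x : ℝ}, x ∈ Metric.ball 0 ε ↔ |x| < ε := by simp
  refine Metric.isOpen_ball.eqOn_of_deriv_eq (convex_ball 0 ε).isPreconnected hf.differentiableOn
    (fun x _ => (hP x).differentiableAt.differentiableWithinAt) (fun x hx => ?_)
    (Metric.mem_ball_self ((abs_nonneg s).trans_lt hs)) (by simp [P]) (hball.2 hs)
  rw [(hP x).deriv, hfQ x (hball.1 hx)]

def IsLinnikRaoSolution {ι : Type*} [Fintype ι] (ε : ℝ) (c : ι → ℝ) (ψ : ι → ℝ → ℂ) : Prop :=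
  ∀ s₁ s₂ : ℝ, |s₁| < ε → |s₂| < ε → ∑ j, ψ j (s₁ + c j * s₂) = 0

namespace IsLinnikRaoSolution

variable {ι : Type*} [Fintype ι] {ε : ℝ} {c : ι → ℝ} {ψ : ι → ℝ → ℂ}

theorem deriv_smul (h : IsLinnikRaoSolution ε c ψ) (hψ : ∀ j, Differentiable ℝ (ψ j)) (a : ℝ) :
    IsLinnikRaoSolution ε c fun j => (c j - a) • deriv (ψ j) := by
  intro s₁ s₂ h₁ h₂
  set g : ℝ → ℂ := fun u => ∑ j, ψ j (s₁ + c j * s₂ + (c j - a) * u)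
  have hg : HasDerivAt g (∑ j, (c j - a) • deriv (ψ j) (s₁ + c j * s₂)) 0 := by
    refine HasDerivAt.fun_sum fun j _ => ?_
    have := (hψ j _).hasDerivAt.scomp (0 : ℝ)
      (((hasDerivAt_id (0 : ℝ)).const_mul (c j - a)).const_add (s₁ + c j * s₂))
    simpa [Function.comp_def] using this
  have hg0 : g =ᶠ[𝓝 0] fun _ => 0 := by
    have h₁' : ∀ᶠ u in 𝓝 (0 : ℝ), |s₁ - a * u| < ε :=
      (by fun_prop : Continuous fun u : ℝ => |s₁ - a * u|).continuousAt.eventually_lt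
        continuousAt_const (by simpa using h₁)
    have h₂' : ∀ᶠ u in 𝓝 (0 : ℝ), |s₂ + u| < ε :=
      (by fun_prop : Continuous fun u : ℝ => |s₂ + u|).continuousAt.eventually_lt
        continuousAt_const (by simpa using h₂)
    filter_upwards [h₁', h₂'] with u hu₁ hu₂
    rw [← h (s₁ - a * u) (s₂ + u) hu₁ hu₂]
    exact Finset.sum_congr rfl fun j _ => by ring_nf
  exact hg.unique ((hasDerivAt_const 0 (0 : ℂ)).congr_of_eventuallyEq hg0)

theorem convolution (h : IsLinnikRaoSolution ε c ψ) (hψ : ∀ j, Continuous (ψ j))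
    (φ : ContDiffBump (0 : ℝ)) {δ : ℝ} (hφ : φ.rOut + δ ≤ ε) :
    IsLinnikRaoSolution δ c fun j => φ.normed volume ⋆[ContinuousLinearMap.lsmul ℝ ℝ] ψ j := by
  intro s₁ s₂ h₁ h₂
  have hint : ∀ j ∈ Finset.univ,
      Integrable fun t => φ.normed volume t • ψ j (s₁ + c j * s₂ - t) := fun j _ =>
    (φ.continuous_normed.smul ((hψ j).comp (continuous_const.sub continuous_id))
      ).integrable_of_hasCompactSupport φ.hasCompactSupport_normed.smul_right
  simp only [convolution_lsmul]
  suffices ∀ t, ∑ j, φ.normed volume t • ψ j (s₁ + c j * s₂ - t) = 0 by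
    rw [← integral_finsetSum _ hint, funext this, integral_zero]
  intro t
  by_cases ht : t ∈ Function.support (φ.normed volume)
  · rw [φ.support_normed_eq, Metric.mem_ball, dist_zero_right, Real.norm_eq_abs] at ht
    have hs : |s₁ - t| < ε := (abs_sub _ _).trans_lt (by linarith)
    calc ∑ j, φ.normed volume t • ψ j (s₁ + c j * s₂ - t)
        = φ.normed volume t • ∑ j, ψ j (s₁ - t + c j * s₂) := by
          rw [Finset.smul_sum]; congr! 3; ring
      _ = 0 := by rw [h _ _ hs (by linarith [φ.rOut_pos]), smul_zero]
  · simp [Function.notMem_support.1 ht]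

theorem exists_mem_degreeLT_of_contDiff : ∀ {n : ℕ} {c : Fin n → ℝ} {ψ : Fin n → ℝ → ℂ},
    Function.Injective c → (∀ j, ContDiff ℝ ∞ (ψ j)) → IsLinnikRaoSolution ε c ψ →
    ∀ j, ∃ P ∈ degreeLT ℂ n, ∀ s, |s| < ε → ψ j s = P.eval (s : ℂ)
  | 0, _, _, _, _, _, j => j.elim0
  | n + 1, c, ψ, hc, hψ, h, j => by
    set a := c (Fin.last n)
    have hψd : ∀ j, Differentiable ℝ (ψ j) := fun j => (hψ j).differentiable (by simp)
    have hcne : ∀ i : Fin n, ((c i.castSucc - a : ℝ) : ℂ) ≠ 0 := fun i =>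
      Complex.ofReal_ne_zero.2 (sub_ne_zero.2 (hc.ne (Fin.castSucc_lt_last i).ne))
    have hder : IsLinnikRaoSolution ε (c ∘ Fin.castSucc)
        fun i => (c i.castSucc - a) • deriv (ψ i.castSucc) := by
      intro s₁ s₂ h₁ h₂
      simpa [a, Fin.sum_univ_castSucc] using h.deriv_smul hψd a s₁ s₂ h₁ h₂
    have hcastSucc : ∀ i : Fin n, ∃ P ∈ degreeLT ℂ (n + 1),
        ∀ s, |s| < ε → ψ i.castSucc s = P.eval (s : ℂ) := by
      intro i
      obtain ⟨Q, hQ, hψQ⟩ := exists_mem_degreeLT_of_contDiff (hc.comp (Fin.castSucc_injective n))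
        (fun i => (contDiff_infty_iff_deriv.1 (hψ i.castSucc)).2.const_smul (c i.castSucc - a))
        hder i
      refine exists_mem_degreeLT_eqOn_of_deriv (hψd _) (Q := C ((c i.castSucc - a : ℝ) : ℂ)⁻¹ * Q)
        (by rw [C_mul']; exact Submodule.smul_mem _ _ hQ) fun s hs => ?_
      rw [eval_mul, eval_C, ← hψQ s hs, Complex.real_smul, ← mul_assoc,
        inv_mul_cancel₀ (hcne i), one_mul]
    choose P hP hψP using hcastSucc
    refine Fin.lastCases ⟨-∑ i, P i, Submodule.neg_mem _ (Submodule.sum_mem _ fun i _ => hP i),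
      fun s hs => ?_⟩ (fun i => ⟨P i, hP i, hψP i⟩) j
    have := h s 0 hs (by simpa using (abs_nonneg s).trans_lt hs)
    simp only [mul_zero, add_zero, Fin.sum_univ_castSucc] at this
    simp only [eval_neg, eval_finsetSum, ← hψP _ s hs]
    linear_combination this

end IsLinnikRaoSolution

theorem exists_mem_degreeLT_eqOn_of_tendsto {ι : Type*} {l : Filter ι} [l.NeBot] {n : ℕ}
    {S : Set ℝ} (hS : S.Infinite) {f : ι → ℝ → ℂ} {g : ℝ → ℂ}
    (hf : ∀ᶠ k in l, ∃ P ∈ degreeLT ℂ n, ∀ s ∈ S, f k s = P.eval (s : ℂ))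
    (hfg : ∀ s ∈ S, Tendsto (fun k => f k s) l (𝓝 (g s))) :
    ∃ P ∈ degreeLT ℂ n, ∀ s ∈ S, g s = P.eval (s : ℂ) := by
  obtain ⟨t, htS, rfl⟩ := hS.exists_subset_card_eq n
  set v : ℝ → ℂ := fun x => x
  have hv : Set.InjOn v t := Complex.ofReal_injective.injOn
  have heval : ∀ (r : ℝ → ℂ) (s : ℝ), (Lagrange.interpolate t v r).eval (s : ℂ) =
      ∑ x ∈ t, r x * (Lagrange.basis t v x).eval (s : ℂ) := fun r s => by
    simp [Lagrange.interpolate_apply, eval_finsetSum]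
  refine ⟨Lagrange.interpolate t v g, mem_degreeLT.2 (Lagrange.degree_interpolate_lt _ hv),
    fun s hs => tendsto_nhds_unique (hfg s hs) ?_⟩
  rw [heval]
  refine (tendsto_finsetSum _ fun x hx => (hfg x (htS hx)).mul_const _).congr' ?_
  filter_upwards [hf] with k ⟨P, hP, hfP⟩
  rw [hfP s hs, Lagrange.eq_interpolate_of_eval_eq _ hv (mem_degreeLT.1 hP)
    fun x hx => (hfP x (htS hx)).symm, heval]

noncomputable def shrinkingBump {E : Type*} [NormedAddCommGroup E] (k : ℕ) :
    ContDiffBump (0 : E) :=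
  ⟨1 / (k + 1) / 2, 1 / (k + 1), half_pos Nat.one_div_pos_of_nat,
    half_lt_self Nat.one_div_pos_of_nat⟩

theorem tendsto_shrinkingBump_rOut {E : Type*} [NormedAddCommGroup E] :
    Tendsto (fun k => (shrinkingBump k : ContDiffBump (0 : E)).rOut) atTop (𝓝 0) :=
  tendsto_one_div_add_atTop_nhds_zero_nat

theorem linnik_rao_polynomials_general (ε : ℝ) (hε : 0 < ε) (n : ℕ)
    (c : Fin n → ℝ) (hc : Function.Injective c)
    (ψ : Fin n → ℝ → ℂ) (hψ : ∀ j, Continuous (ψ j))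
    (heq : ∀ s₁ s₂ : ℝ, |s₁| < ε → |s₂| < ε → ∑ j, ψ j (s₁ + c j * s₂) = 0) :
    ∃ δ : ℝ, 0 < δ ∧ ∃ P : Fin n → Polynomial ℂ,
      ∀ j, ∀ s : ℝ, |s| < δ → ψ j s = (P j).eval (s : ℂ) := by
  set Ψ : ℕ → Fin n → ℝ → ℂ := fun k j =>
    (shrinkingBump k).normed volume ⋆[ContinuousLinearMap.lsmul ℝ ℝ] ψ j
  have hΨ : ∀ᶠ k in atTop, IsLinnikRaoSolution (ε / 2) c (Ψ k) :=
    (tendsto_shrinkingBump_rOut.eventually (ge_mem_nhds (half_pos hε))).mono fun k hk =>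
      IsLinnikRaoSolution.convolution heq hψ _ ((add_le_add_left hk _).trans_eq (add_halves ε))
  have hΨsmooth : ∀ k j, ContDiff ℝ ∞ (Ψ k j) := fun k j =>
    (shrinkingBump k).hasCompactSupport_normed.contDiff_convolution_left _
      (shrinkingBump k).contDiff_normed (hψ j).locallyIntegrable
  have hball : {s : ℝ | |s| < ε / 2}.Infinite :=
    (Set.Ioo_infinite (neg_lt_self (half_pos hε))).mono fun s hs => abs_lt.2 hs
  choose P _ hψP using fun j => exists_mem_degreeLT_eqOn_of_tendsto hball
    (hΨ.mono fun k hk => hk.exists_mem_degreeLT_of_contDiff hc (hΨsmooth k) j)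
    fun s _ => ContDiffBump.convolution_tendsto_right_of_continuous tendsto_shrinkingBump_rOut
      (hψ j) s
  exact ⟨ε / 2, half_pos hε, P, hψP⟩

/-- A particular case of the Linnik–Rao lemma: if continuous functions `ψ_j : ℝ → ℂ`
satisfy `∑ j, ψ_j (s₁ + c_j·s₂) = 0` for all `|s₁| < ε`, `|s₂| < ε`, where the `c_j`
are pairwise distinct, then the `ψ_j` are polynomials in a neighbourhood of zero. -/
theorem linnik_rao_polynomials (ε : ℝ) (hε : 0 < ε) (n : ℕ) (hn : 1 ≤ n)
    (c : Fin n → ℝ) (hc : Function.Injective c)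
    (ψ : Fin n → ℝ → ℂ) (hψ : ∀ j, Continuous (ψ j))
    (heq : ∀ s₁ s₂ : ℝ, |s₁| < ε → |s₂| < ε → ∑ j, ψ j (s₁ + c j * s₂) = 0) :
    ∃ δ : ℝ, 0 < δ ∧ ∃ P : Fin n → Polynomial ℂ,
      ∀ j, ∀ s : ℝ, |s| < δ → ψ j s = (P j).eval (s : ℂ) :=
  linnik_rao_polynomials_general ε hε n c hc ψ hψ heq
end

section
/- Let X = ℝ × 𝕋, let a, b ∈ ℝ with a > 0, and let α be the topological automorphism α(t,z) = (a·t, e^{i·b·t}·z) of X. Let μ_1, μ_2 be probability measures on X and suppose Measure.map ((x,y) ↦ (x + y, x + α(y))) (μ_1 ⊗ μ_2) = Measure.map ((x,y) ↦ (x + y, −(x + α(y)))) (μ_1 ⊗ μ_2). Then there exist x_1, x_2 ∈ X such that (μ_j * δ_{−x_j})(G) = 1 for j = 1, 2, i.e. some shifts of μ_1 and μ_2 are concentrated on G. -/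
open MeasureTheory Complex

noncomputable instance : MeasurableSpace Circle := borel Circle
instance : BorelSpace Circle := ⟨rfl⟩
noncomputable instance : MeasurableSpace (Additive Circle) :=
  inferInstanceAs (MeasurableSpace Circle)

/-- The group `X = ℝ × 𝕋`, with the circle written additively. -/
abbrev XT : Type := ℝ × Additive Circle

/-- The element `−1` of the circle group. -/
def negOneCircle : Circle := ⟨-1, by simp [Submonoid.unitSphere]⟩

/-- The automorphism `α(t,z) = (a·t, e^{i·b·t}·z)` of `ℝ × 𝕋`. -/
noncomputable def alphaXT (a b : ℝ) : XT → XT :=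
  fun x => (a * x.1, Additive.ofMul (Circle.exp (b * x.1)) + x.2)

/-- The two-element subgroup `G = {(0,1), (0,−1)}` of `ℝ × 𝕋`. -/
def setG : Set XT :=
  {x | x.1 = 0 ∧ (x.2.toMul = (1 : Circle) ∨ x.2.toMul = negOneCircle)}

/-!
Let `xⱼ` be the `ℝ`-coordinate of `ξⱼ`. Projecting the symmetry `(L₁, L₂) ∼ (L₁, -L₂)` onto `ℝ` gives
`φ₁(2t) φ₂((1 + a)t) = φ₂((1 - a)t)` for the characteristic functions `φⱼ` of the `xⱼ`. As
`|(1 - a)/(1 + a)| < 1`, iterating forces `|φ₂| ≡ 1`, so `x₂` is almost surely a constant `r`.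
Then `L₂ - L₁ = α ξ₂ - ξ₂` is almost surely a constant `c`, by symmetry so is `-L₂ - L₁`, and
adding, `2ξ₁ + 2ξ₂ = -2c` almost surely. By independence `2ξ₁` and `2ξ₂` are almost surely
constant, and since `X` is `2`-divisible with `2`-torsion subgroup `G`, each `ξⱼ` lies almost
surely in a coset of `G`.
-/

instance : BorelSpace (Additive Circle) := ⟨rfl⟩

lemma apply_zero_le_of_apply_mul_le {g : ℝ → ℝ} (hg : ContinuousAt g 0) {c : ℝ} (hc : |c| < 1)
    (h : ∀ s, g (c * s) ≤ g s) (s : ℝ) : g 0 ≤ g s := by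
  have hpow : ∀ n : ℕ, g (c ^ n * s) ≤ g s := by
    intro n
    induction n with
    | zero => simp
    | succ n ih => exact (h _).trans_eq' (by rw [pow_succ', mul_assoc]) |>.trans ih
  have hlim : Filter.Tendsto (fun n : ℕ => c ^ n * s) Filter.atTop (nhds 0) := by
    simpa using (tendsto_pow_atTop_nhds_zero_of_abs_lt_one hc).mul_const s
  exact le_of_tendsto (hg.tendsto.comp hlim) (Filter.Eventually.of_forall hpow)

namespace MeasureTheory

variable {α β G : Type*} [MeasurableSpace α] [MeasurableSpace β] [AddCommGroup G]

lemma exists_ae_eq_of_ae_add_eq {μ : Measure α} {ν : Measure β} [NeZero μ] [NeZero ν]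
    [SFinite ν] {f : α → G} {g : β → G} {d : G} (h : ∀ᵐ p ∂μ.prod ν, f p.1 + g p.2 = d) :
    ∃ u, (∀ᵐ x ∂μ, f x = u) ∧ ∀ᵐ y ∂ν, g y = d - u := by
  have h' := Measure.ae_ae_of_ae_prod h
  obtain ⟨x₀, hx₀⟩ := h'.exists
  refine ⟨f x₀, ?_, hx₀.mono fun y hy => eq_sub_of_add_eq' hy⟩
  filter_upwards [h'] with x hx
  obtain ⟨y, hy, hy₀⟩ := (hx.and hx₀).exists
  exact add_right_cancel (hy.trans hy₀.symm)

variable {E : Type*} [NormedAddCommGroup E] [InnerProductSpace ℝ E]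
  [MeasurableSpace E] [BorelSpace E] [SecondCountableTopology E]

lemma charFun_map_prod_add {μ : Measure α} {ν : Measure β} [IsFiniteMeasure μ]
    [IsFiniteMeasure ν] {f : α → E} {g : β → E} (hf : Measurable f) (hg : Measurable g) (t : E) :
    charFun ((μ.prod ν).map fun p => f p.1 + g p.2) t =
      charFun (μ.map f) t * charFun (ν.map g) t := by
  rw [← charFun_conv, Measure.conv, Measure.map_prod_map _ _ hf hg,
    Measure.map_map (by fun_prop) (hf.prodMap hg)]
  rfl

lemma exists_ae_eq_of_norm_charFun_eq_one [CompleteSpace E] {ρ : Measure E}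
    [IsProbabilityMeasure ρ] (h : ∀ t, ‖charFun ρ t‖ = 1) : ∃ u, ∀ᵐ x ∂ρ, x = u := by
  have : IsProbabilityMeasure (ρ.map Neg.neg) := Measure.isProbabilityMeasure_map (by fun_prop)
  have hsymm : ρ ∗ ρ.map Neg.neg = Measure.dirac 0 := by
    refine Measure.ext_of_charFun (funext fun t => ?_)
    have hneg : (Neg.neg : E → E) = ((-1 : ℝ) • ·) := funext fun x => (neg_one_smul ℝ x).symm
    rw [charFun_conv, hneg, charFun_map_smul, neg_one_smul, charFun_neg, mul_conj,
      normSq_eq_norm_sq, h t, charFun_dirac]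
    simp
  have hdiff : ∀ᵐ p ∂ρ.prod (ρ.map Neg.neg), id p.1 + id p.2 = (0 : E) := by
    have hzero : ∀ᵐ z ∂(ρ ∗ ρ.map Neg.neg), z = 0 := by
      rw [hsymm, ae_dirac_eq]
      exact Filter.eventually_pure.2 rfl
    exact ae_of_ae_map (by fun_prop) hzero
  obtain ⟨u, hu, -⟩ := exists_ae_eq_of_ae_add_eq hdiff
  exact ⟨u, hu⟩

end MeasureTheory

lemma Circle.mul_self_eq_one_iff (z : Circle) : z * z = 1 ↔ z = 1 ∨ z = negOneCircle := by
  simp only [← Circle.coe_inj, Circle.coe_mul, Circle.coe_one]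
  exact _root_.mul_self_eq_one_iff

lemma two_nsmul_eq_zero_iff_mem_setG (x : XT) : 2 • x = 0 ↔ x ∈ setG := by
  rw [Prod.ext_iff, two_nsmul]
  exact and_congr (by simp) (Circle.mul_self_eq_one_iff x.2.toMul)

lemma measurableSet_setG : MeasurableSet setG := by
  have : setG = (fun x : XT => 2 • x) ⁻¹' {0} := by
    ext x; exact (two_nsmul_eq_zero_iff_mem_setG x).symm
  rw [this]
  exact (measurableSet_singleton 0).preimage (by fun_prop)

lemma exists_two_nsmul_eq (x : XT) : ∃ y : XT, 2 • y = x := by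
  obtain ⟨θ, hθ⟩ := Circle.exp_surjective x.2.toMul
  refine ⟨(x.1 / 2, Additive.ofMul (Circle.exp (θ / 2))), Prod.ext ?_ ?_⟩
  · exact (two_nsmul _).trans (add_halves x.1)
  · rw [Prod.smul_snd, two_nsmul, ← ofMul_mul, ← Circle.exp_add, add_halves, hθ, ofMul_toMul]

lemma exists_conv_dirac_setG_eq_one {μ : Measure XT} [IsProbabilityMeasure μ] {u : XT}
    (h : ∀ᵐ x ∂μ, 2 • x = u) : ∃ x₀ : XT, (μ ∗ Measure.dirac (-x₀)) setG = 1 := by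
  obtain ⟨x₀, hx₀⟩ := exists_two_nsmul_eq u
  refine ⟨x₀, ?_⟩
  have hshift : ∀ᵐ x ∂μ, x ∈ (· + -x₀) ⁻¹' setG := h.mono fun x hx => by
    rw [Set.mem_preimage, ← two_nsmul_eq_zero_iff_mem_setG, smul_add, hx, ← hx₀, smul_neg,
      add_neg_cancel]
  have hmeas : MeasurableSet ((· + -x₀) ⁻¹' setG) :=
    measurableSet_setG.preimage (measurable_add_const _)
  rwa [ae_mem_iff_measure_eq hmeas.nullMeasurableSet, measure_univ,
    ← Measure.map_apply (measurable_add_const _) measurableSet_setG, ← Measure.conv_dirac]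
    at hshift

lemma continuous_alphaXT (a b : ℝ) : Continuous (alphaXT a b) := by
  unfold alphaXT
  exact (continuous_const.mul continuous_fst).prodMk (Continuous.add
    (Circle.exp.continuous.comp (by fun_prop) :
      Continuous fun x : XT => Additive.ofMul (Circle.exp (b * x.1))) continuous_snd)

lemma alphaXT_sub_self_eq {a b : ℝ} {x y : XT} (h : x.1 = y.1) :
    alphaXT a b x - x = alphaXT a b y - y := by
  simp [alphaXT, Prod.ext_iff, h]

section Symmetry

variable {a b : ℝ} {μ₁ μ₂ : Measure XT} [IsProbabilityMeasure μ₁] [IsProbabilityMeasure μ₂]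

def HeydeSymmetric (a b : ℝ) (μ₁ μ₂ : Measure XT) : Prop :=
  Measure.map (fun p : XT × XT => (p.1 + p.2, p.1 + alphaXT a b p.2)) (μ₁.prod μ₂) =
    Measure.map (fun p : XT × XT => (p.1 + p.2, -(p.1 + alphaXT a b p.2))) (μ₁.prod μ₂)

lemma measurable_linearForms (a b : ℝ) :
    Measurable fun p : XT × XT => (p.1 + p.2, p.1 + alphaXT a b p.2) :=
  (measurable_fst.add measurable_snd).prodMk
    (measurable_fst.add ((continuous_alphaXT a b).measurable.comp measurable_snd))

lemma measurable_linearForms_neg (a b : ℝ) :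
    Measurable fun p : XT × XT => (p.1 + p.2, -(p.1 + alphaXT a b p.2)) :=
  measurable_fst.prodMk measurable_snd.neg |>.comp (measurable_linearForms a b)

/-- On the `ℝ`-coordinates, the symmetry reads `2 x₁ + (1 + a) x₂ ∼ (1 - a) x₂`. -/
lemma charFun_fst_mul_charFun_fst_eq (h : HeydeSymmetric a b μ₁ μ₂) (t : ℝ) :
    charFun μ₁.fst (2 * t) * charFun μ₂.fst ((1 + a) * t) =
      charFun μ₂.fst ((1 - a) * t) := by
  have hG : Measurable fun w : XT × XT => w.1.1 + w.2.1 :=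
    measurable_fst.fst.add measurable_snd.fst
  have hsum := congrArg (fun ν => charFun (ν.map fun w : XT × XT => w.1.1 + w.2.1) t) h
  simp only [Measure.map_map hG (measurable_linearForms a b),
    Measure.map_map hG (measurable_linearForms_neg a b)] at hsum
  have e₁ : (fun w : XT × XT => w.1.1 + w.2.1) ∘
      (fun p : XT × XT => (p.1 + p.2, p.1 + alphaXT a b p.2)) =
      fun p => 2 * p.1.1 + (1 + a) * p.2.1 := by
    funext p; simp only [Function.comp_apply, Prod.fst_add, alphaXT]; ring
  have e₂ : (fun w : XT × XT => w.1.1 + w.2.1) ∘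
      (fun p : XT × XT => (p.1 + p.2, -(p.1 + alphaXT a b p.2))) =
      fun p => 0 * p.1.1 + (1 - a) * p.2.1 := by
    funext p; simp only [Function.comp_apply, Prod.fst_add, Prod.fst_neg, alphaXT]; ring
  have hfst (c : ℝ) : Measurable fun x : XT => c * x.1 := measurable_fst.const_mul c
  rw [e₁, e₂, charFun_map_prod_add (hfst 2) (hfst (1 + a)),
    charFun_map_prod_add (hfst 0) (hfst (1 - a))] at hsum
  simp only [charFun_map_mul_comp measurable_fst.aemeasurable, ← Measure.fst.eq_1] at hsum
  rwa [zero_mul, charFun_zero, probReal_univ, ofReal_one, one_mul] at hsum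

lemma exists_ae_fst_eq (ha : 0 < a) (h : HeydeSymmetric a b μ₁ μ₂) :
    ∃ r : ℝ, ∀ᵐ y ∂μ₂, y.1 = r := by
  have h1a : 0 < 1 + a := by linarith
  have hc : |(1 - a) / (1 + a)| < 1 := by
    rw [abs_div, abs_of_pos h1a, div_lt_one h1a, abs_lt]
    constructor <;> linarith
  have hstep : ∀ s, ‖charFun μ₂.fst ((1 - a) / (1 + a) * s)‖ ≤ ‖charFun μ₂.fst s‖ := fun s => by
    have hs := charFun_fst_mul_charFun_fst_eq h (s / (1 + a))
    rw [mul_div_cancel₀ s h1a.ne', show (1 - a) * (s / (1 + a)) = (1 - a) / (1 + a) * s by ring]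
      at hs
    rw [← hs, norm_mul]
    exact mul_le_of_le_one_left (norm_nonneg _) (norm_charFun_le_one _)
  have hnorm : ∀ s, ‖charFun μ₂.fst s‖ = 1 := fun s => le_antisymm (norm_charFun_le_one s) <| by
    simpa using apply_zero_le_of_apply_mul_le continuous_charFun.norm.continuousAt hc hstep s
  obtain ⟨r, hr⟩ := exists_ae_eq_of_norm_charFun_eq_one hnorm
  exact ⟨r, ae_of_ae_map measurable_fst.aemeasurable hr⟩

lemma exists_ae_two_nsmul_add_eq (ha : 0 < a) (h : HeydeSymmetric a b μ₁ μ₂) :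
    ∃ d : XT, ∀ᵐ p ∂μ₁.prod μ₂, 2 • p.1 + 2 • p.2 = d := by
  obtain ⟨r, hr⟩ := exists_ae_fst_eq ha h
  set c : XT := alphaXT a b (r, 0) - (r, 0)
  have hset : MeasurableSet {w : XT × XT | w.2 - w.1 = c} :=
    (measurable_snd.sub measurable_fst) (measurableSet_singleton c)
  have hL : ∀ᵐ p ∂μ₁.prod μ₂, (p.1 + alphaXT a b p.2) - (p.1 + p.2) = c := by
    filter_upwards [Measure.quasiMeasurePreserving_snd.ae hr] with p hp
    rw [add_sub_add_left_eq_sub, alphaXT_sub_self_eq (y := (r, 0)) hp]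
  have hL' : ∀ᵐ p ∂μ₁.prod μ₂, -(p.1 + alphaXT a b p.2) - (p.1 + p.2) = c := by
    rw [← ae_map_iff (p := fun w => w.2 - w.1 = c) (measurable_linearForms_neg a b).aemeasurable
      hset, ← h, ae_map_iff (measurable_linearForms a b).aemeasurable hset]
    exact hL
  -- `(L₂ - L₁) + (-L₂ - L₁) = -2 L₁`
  refine ⟨-(2 • c), ?_⟩
  filter_upwards [hL, hL'] with p h₁ h₂
  rw [two_nsmul c]
  nth_rw 1 [← h₁]
  rw [← h₂]
  abel

end Symmetry

/-- Heyde's theorem for `ℝ × 𝕋` with `α(t,z) = (a·t, e^{i·b·t}·z)`, case `a > 0`: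
some shifts of the distributions are concentrated on `G`. -/
theorem heyde_R_T_pos_a (a b : ℝ) (ha : 0 < a)
    (μ₁ μ₂ : Measure XT) [IsProbabilityMeasure μ₁] [IsProbabilityMeasure μ₂]
    (hsym :
      Measure.map (fun p : XT × XT => (p.1 + p.2, p.1 + alphaXT a b p.2)) (μ₁.prod μ₂) =
      Measure.map (fun p : XT × XT => (p.1 + p.2, -(p.1 + alphaXT a b p.2))) (μ₁.prod μ₂)) :
    ∃ x₁ x₂ : XT,
      Measure.conv μ₁ (Measure.dirac (-x₁)) setG = 1 ∧
      Measure.conv μ₂ (Measure.dirac (-x₂)) setG = 1 := by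
  obtain ⟨d, hd⟩ := exists_ae_two_nsmul_add_eq ha hsym
  obtain ⟨u, h₁, h₂⟩ := exists_ae_eq_of_ae_add_eq (f := (2 • ·)) (g := (2 • ·)) hd
  obtain ⟨x₁, hx₁⟩ := exists_conv_dirac_setG_eq_one h₁
  obtain ⟨x₂, hx₂⟩ := exists_conv_dirac_setG_eq_one h₂
  exact ⟨x₁, x₂, hx₁, hx₂⟩
end

section
/- Let X = ℝ × 𝕋, let a, b ∈ ℝ with a > 0, and let α be the topological automorphism α(t,z) = (a·t, e^{i·b·t}·z^{−1}) of X. Let μ_1, μ_2 be probability measures on X and suppose Measure.map ((x,y) ↦ (x + y, x + α(y))) (μ_1 ⊗ μ_2) = Measure.map ((x,y) ↦ (x + y, −(x + α(y)))) (μ_1 ⊗ μ_2). Then there exist x_1, x_2 ∈ X such that the shifted measures λ_j = μ_j * δ_{−x_j} are concentrated on the subgroup {0} × 𝕋 (λ_j({0} × 𝕋) = 1), and there exists a probability measure ω on X with ω(G) = 1 such that either λ_2 = λ_1 * ω or λ_1 = λ_2 * ω. -/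
open MeasureTheory Complex

/-- The automorphism `α(t,z) = (a·t, e^{i·b·t}·z⁻¹)` of `ℝ × 𝕋`. -/
noncomputable def alphaXTinv (a b : ℝ) : XT → XT :=
  fun x => (a * x.1, Additive.ofMul (Circle.exp (b * x.1)) - x.2)

/-!
Testing the two joint laws against the characters `χ_{s,n}(t, z) = e^{ist} zⁿ` of `X` turns the
symmetry into a functional equation for the characteristic functions `φⱼ` of the `μⱼ`:
`φ₁(s+u, n+m) φ₂(s+au+bm, n-m) = φ₁(s-u, n-m) φ₂(s-au-bm, n+m)`.
At `s = u`, `n = m = 0` it gives `|φ₂((1-a)u, 0)| ≤ |φ₂((1+a)u, 0)|`; since `|1 - a| < 1 + a`,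
iterating and continuity at `0` force `|φⱼ(·, 0)| ≡ 1`, so the `ℝ`-marginals are point masses
(testing at the frequencies `1` and `2π` and using that `π` is irrational).
Recentred, both measures live on `{0} × 𝕋`, and their Fourier coefficients `g, h` satisfy
`g(p) h(q) = g(q) h(p)` whenever `p ≡ q mod 2`. Hence `g = h` at even `p`, and at odd `p` one of
them is a real multiple `κ` of the other with `|κ| ≤ 1`. The measure on `G` with masses
`(1 ± κ)/2` has Fourier coefficients `1` at even and `κ` at odd `n`, and uniqueness of the
Fourier transform on `X` concludes.
-/

open scoped BoundedContinuousFunction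

lemma apply_zero_le_of_apply_smul_le {E : Type*} [AddCommGroup E] [Module ℝ E]
    [TopologicalSpace E] [ContinuousSMul ℝ E] {g : E → ℝ} (hg : Continuous g) {r : ℝ}
    (hr : |r| < 1) (h : ∀ w, g (r • w) ≤ g w) (w : E) : g 0 ≤ g w := by
  have hpow (k : ℕ) : g (r ^ k • w) ≤ g w := by
    induction k with
    | zero => simp
    | succ k ih => exact (pow_succ' r k ▸ mul_smul r (r ^ k) w ▸ h _).trans ih
  have hlim : Filter.Tendsto (fun k : ℕ => r ^ k • w) Filter.atTop (nhds 0) := by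
    simpa using (tendsto_pow_atTop_nhds_zero_of_abs_lt_one hr).smul_const w
  exact le_of_tendsto' ((hg.tendsto 0).comp hlim) hpow

lemma Circle.eq_of_exp_eq_of_exp_two_pi_mul_eq {x y : ℝ} (h₁ : Circle.exp x = Circle.exp y)
    (h₂ : Circle.exp (2 * Real.pi * x) = Circle.exp (2 * Real.pi * y)) : x = y := by
  obtain ⟨m, hm⟩ := Circle.exp_eq_exp.mp h₁
  obtain ⟨k, hk⟩ := Circle.exp_eq_exp.mp h₂
  have hxk : x = y + k := by nlinarith [Real.pi_pos]
  rcases eq_or_ne m 0 with rfl | hm0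
  · simpa using hm
  · exact absurd (by push_cast; linarith : Real.pi * ↑(2 * m) = k)
      ((irrational_pi.mul_intCast (by omega)).ne_int k)

section ParityRelation

variable {g h : ℤ → ℂ}

lemma exists_real_forall_odd_eq_mul (hg : ∀ n, g (-n) = starRingEnd ℂ (g n))
    (hh : ∀ n, h (-n) = starRingEnd ℂ (h n))
    (hgh : ∀ p q, Even (p - q) → g p * h q = g q * h p) {p₀ : ℤ} (hp₀ : ¬Even p₀)
    (hg₀ : g p₀ ≠ 0) : ∃ κ : ℝ, ∀ n, ¬Even n → h n = κ * g n := by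
  have hconj : starRingEnd ℂ (h p₀ / g p₀) = h p₀ / g p₀ := by
    have h' := hgh p₀ (-p₀) ⟨p₀, by ring⟩
    rw [hg, hh] at h'
    rw [map_div₀, div_eq_div_iff (by simpa using hg₀) hg₀]
    linear_combination h'
  refine ⟨(h p₀ / g p₀).re, fun n hn => ?_⟩
  rw [Complex.conj_eq_iff_re.mp hconj, div_mul_eq_mul_div, eq_div_iff hg₀]
  linear_combination hgh p₀ n (Int.even_sub.mpr (iff_of_false hp₀ hn))

lemma exists_abs_le_one_of_parity_relation (hg0 : g 0 = 1) (hh0 : h 0 = 1)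
    (hg : ∀ n, g (-n) = starRingEnd ℂ (g n)) (hh : ∀ n, h (-n) = starRingEnd ℂ (h n))
    (hgh : ∀ p q, Even (p - q) → g p * h q = g q * h p) :
    ∃ κ : ℝ, |κ| ≤ 1 ∧ ((∀ n, h n = g n * if Even n then 1 else (κ : ℂ)) ∨
      ∀ n, g n = h n * if Even n then 1 else (κ : ℂ)) := by
  have heven (n : ℤ) (hn : Even n) : g n = h n := by
    simpa [hg0, hh0] using hgh n 0 (by simpa using hn)
  by_cases hodd : ∀ n, ¬Even n → g n = 0
  · refine ⟨0, by simp, Or.inr fun n => ?_⟩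
    split_ifs with hn
    · simpa using heven n hn
    · simpa using hodd n hn
  push Not at hodd
  obtain ⟨p₀, hp₀, hg₀⟩ := hodd
  obtain ⟨κ, hκ⟩ := exists_real_forall_odd_eq_mul hg hh hgh hp₀ hg₀
  rcases le_or_gt |κ| 1 with hle | hlt
  · refine ⟨κ, hle, Or.inl fun n => ?_⟩
    split_ifs with hn
    · simpa using (heven n hn).symm
    · rw [hκ n hn, mul_comm]
  · have hκ0 : κ ≠ 0 := by rintro rfl; norm_num at hlt
    refine ⟨κ⁻¹, by rw [abs_inv]; exact inv_le_one_of_one_le₀ hlt.le, Or.inr fun n => ?_⟩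
    split_ifs with hn
    · simpa using heven n hn
    · rw [hκ n hn, Complex.ofReal_inv, mul_comm, inv_mul_cancel_left₀ (mod_cast hκ0)]

end ParityRelation

instance inst_s16 : BorelSpace (Additive Circle) := ⟨rfl⟩
instance : PolishSpace (Additive Circle) := inferInstanceAs (PolishSpace Circle)
instance : SecondCountableTopology (Additive Circle) :=
  inferInstanceAs (SecondCountableTopology Circle)

namespace XT

noncomputable def char (s : ℝ) (n : ℤ) (x : XT) : Circle := Circle.exp (s * x.1) * x.2.toMul ^ n

section Char

variable (s t : ℝ) (n k : ℤ)

@[fun_prop]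
lemma continuous_char : Continuous (char s n) := by
  unfold char; fun_prop

@[fun_prop]
lemma continuous_coe_char : Continuous fun x => (char s n x : ℂ) :=
  continuous_subtype_val.comp (continuous_char s n)

lemma char_add (x y : XT) : char s n (x + y) = char s n x * char s n y := by
  simp only [char, Prod.fst_add, Prod.snd_add, toMul_add, mul_add, Circle.exp_add, mul_zpow]
  ac_rfl

lemma char_neg_neg (x : XT) : char (-s) (-n) x = (char s n x)⁻¹ := by
  simp only [char, neg_mul, Circle.exp_neg, zpow_neg, mul_inv]

lemma char_neg (x : XT) : char s n (-x) = char (-s) (-n) x := by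
  simp only [char, Prod.fst_neg, Prod.snd_neg, toMul_neg, mul_neg, neg_mul, inv_zpow, zpow_neg]

lemma char_mul_char (x : XT) : char s n x * char t k x = char (s + t) (n + k) x := by
  simp only [char, add_mul, Circle.exp_add, zpow_add]
  ac_rfl

lemma char_alphaXTinv (a b : ℝ) (y : XT) :
    char s n (alphaXTinv a b y) = char (a * s + b * n) (-n) y := by
  simp only [char, alphaXTinv, toMul_sub, toMul_ofMul, div_zpow, zpow_neg,
    ← Circle.exp_intCast_mul]
  rw [div_eq_mul_inv, ← mul_assoc, ← Circle.exp_add]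
  congr 2
  ring

lemma char_mk_exp (b c : ℝ) :
    char s n (c, Additive.ofMul (Circle.exp (b * c))) = Circle.exp ((s + b * n) * c) := by
  simp only [char, toMul_ofMul, ← Circle.exp_intCast_mul, ← Circle.exp_add]
  ring_nf

end Char

noncomputable def charBCF (s : ℝ) (n : ℤ) : XT →ᵇ ℂ :=
  .mkOfBound ⟨fun x => (char s n x : ℂ), continuous_coe_char s n⟩ 2 fun x y =>
    (dist_le_norm_add_norm _ _).trans
      (by simp only [ContinuousMap.coe_mk, Circle.norm_coe]; norm_num)

@[simp] lemma charBCF_apply (s : ℝ) (n : ℤ) (x : XT) : charBCF s n x = char s n x := rfl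

lemma charBCF_mul (s t : ℝ) (n k : ℤ) : charBCF s n * charBCF t k = charBCF (s + t) (n + k) := by
  ext x; simp [← char_mul_char]

lemma charBCF_zero : charBCF 0 0 = 1 := by
  ext x; simp [char]

lemma star_charBCF (s : ℝ) (n : ℤ) : star (charBCF s n) = charBCF (-s) (-n) := by
  ext x
  rw [BoundedContinuousFunction.star_apply, charBCF_apply, charBCF_apply, char_neg_neg,
    Circle.coe_inv_eq_conj]
  rfl

noncomputable def charSubalgebra : StarSubalgebra ℂ (XT →ᵇ ℂ) where
  toSubalgebra := Algebra.adjoin ℂ (Set.range fun p : ℝ × ℤ => charBCF p.1 p.2)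
  star_mem' := by
    change Algebra.adjoin ℂ _ ≤ star (Algebra.adjoin ℂ _)
    refine Algebra.adjoin_le ?_
    rintro - ⟨⟨s, n⟩, rfl⟩
    exact Algebra.subset_adjoin ⟨(-s, -n), (star_charBCF s n).symm⟩

lemma charSubalgebra_toSubmodule :
    Subalgebra.toSubmodule charSubalgebra.toSubalgebra =
      Submodule.span ℂ (Set.range fun p : ℝ × ℤ => charBCF p.1 p.2) := by
  refine Algebra.adjoin_eq_span_of_subset ℂ (subset_trans ?_ Submodule.subset_span)
  intro f hf
  refine Submonoid.closure_induction (fun _ => id) ⟨(0, 0), charBCF_zero⟩ ?_ hf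
  rintro - - - - ⟨⟨s, n⟩, rfl⟩ ⟨⟨t, k⟩, rfl⟩
  exact ⟨(s + t, n + k), (charBCF_mul s t n k).symm⟩

lemma charSubalgebra_separatesPoints :
    (charSubalgebra.map (BoundedContinuousFunction.toContinuousMapStarₐ ℂ)).SeparatesPoints := by
  intro x y hxy
  have hmem (s : ℝ) (n : ℤ) : (fun z => (char s n z : ℂ)) ∈
      (fun f : C(XT, ℂ) => ⇑f) '' (charSubalgebra.map
        (BoundedContinuousFunction.toContinuousMapStarₐ ℂ) : Set C(XT, ℂ)) :=
    ⟨_, ⟨charBCF s n, Algebra.subset_adjoin ⟨(s, n), rfl⟩, rfl⟩, rfl⟩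
  by_cases h1 : x.1 = y.1
  · refine ⟨_, hmem 0 1, fun h => hxy (Prod.ext h1 (Additive.toMul.injective ?_))⟩
    exact Circle.ext (by simpa [char] using h)
  · refine ⟨_, hmem (Real.pi / (x.1 - y.1)) 0, fun h => Circle.exp_pi_ne_one ?_⟩
    have hπ : Real.pi = Real.pi / (x.1 - y.1) * x.1 - Real.pi / (x.1 - y.1) * y.1 := by
      field_simp [sub_ne_zero.mpr h1]
    rw [hπ, Circle.exp_sub, div_eq_one]
    exact Circle.ext (by simpa [char] using h)

noncomputable def charFun (μ : Measure XT) (s : ℝ) (n : ℤ) : ℂ := ∫ x, (char s n x : ℂ) ∂μ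

theorem ext_of_charFun {P P' : Measure XT} [IsFiniteMeasure P] [IsFiniteMeasure P']
    (h : ∀ s n, charFun P s n = charFun P' s n) : P = P' := by
  refine ext_of_forall_mem_subalgebra_integral_eq_of_polish charSubalgebra_separatesPoints
    fun f hf => ?_
  replace hf : f ∈ Subalgebra.toSubmodule charSubalgebra.toSubalgebra := hf
  rw [charSubalgebra_toSubmodule] at hf
  induction hf using Submodule.span_induction with
  | mem f hf => obtain ⟨⟨s, n⟩, rfl⟩ := hf; exact h s n
  | zero => simp
  | add f g _ _ hf hg =>
    simp only [BoundedContinuousFunction.coe_add, Pi.add_apply]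
    rw [integral_add (f.integrable _) (g.integrable _), integral_add (f.integrable _)
      (g.integrable _), hf, hg]
  | smul c f _ hf =>
    simp only [BoundedContinuousFunction.coe_smul]
    rw [integral_smul, integral_smul, hf]

lemma norm_charFun_le_one (μ : Measure XT) [IsProbabilityMeasure μ] (s : ℝ) (n : ℤ) :
    ‖charFun μ s n‖ ≤ 1 := by
  simpa [charFun] using norm_integral_le_of_norm_le_const (μ := μ) (C := 1)
    (.of_forall fun x => (Circle.norm_coe (char s n x)).le)

lemma charFun_zero_zero (μ : Measure XT) [IsProbabilityMeasure μ] : charFun μ 0 0 = 1 := by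
  simp [charFun, char]

lemma charFun_neg_neg (μ : Measure XT) (s : ℝ) (n : ℤ) :
    charFun μ (-s) (-n) = starRingEnd ℂ (charFun μ s n) := by
  simp only [charFun, char_neg_neg, Circle.coe_inv_eq_conj, integral_conj]

lemma charFun_dirac (y : XT) (s : ℝ) (n : ℤ) : charFun (Measure.dirac y) s n = char s n y := by
  simp [charFun]

lemma charFun_conv (μ ν : Measure XT) [IsFiniteMeasure μ] [IsFiniteMeasure ν] (s : ℝ) (n : ℤ) :
    charFun (μ ∗ ν) s n = charFun μ s n * charFun ν s n := by
  rw [charFun, Measure.conv,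
    integral_map (by fun_prop) (continuous_coe_char s n).aestronglyMeasurable]
  simp only [char_add, Circle.coe_mul]
  exact integral_prod_mul (fun x => (char s n x : ℂ)) (fun x => (char s n x : ℂ))

lemma continuous_charFun_fst (μ : Measure XT) [IsFiniteMeasure μ] (n : ℤ) :
    Continuous fun s => charFun μ s n :=
  continuous_of_dominated (bound := fun _ => 1)
    (fun s => (continuous_coe_char s n).aestronglyMeasurable)
    (fun s => .of_forall fun x => (Circle.norm_coe (char s n x)).le) (integrable_const 1)
    (.of_forall fun x => continuous_subtype_val.comp
      ((Circle.exp.continuous.comp (continuous_mul_const x.1)).mul continuous_const))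

lemma ae_coe_char_eq_charFun {μ : Measure XT} [IsProbabilityMeasure μ] {s : ℝ} {n : ℤ}
    (h : ‖charFun μ s n‖ = 1) : ∀ᵐ x ∂μ, (char s n x : ℂ) = charFun μ s n := by
  rcases ae_eq_const_or_norm_integral_lt_of_norm_le_const (μ := μ) (C := 1)
    (.of_forall fun x => (Circle.norm_coe (char s n x)).le) with hae | hlt
  · exact hae.mono fun x hx => by simpa [average_eq_integral, charFun] using hx
  · simp only [probReal_univ, mul_one] at hlt
    exact absurd h hlt.ne

lemma exists_ae_fst_eq_of_norm_charFun_eq_one {μ : Measure XT} [IsProbabilityMeasure μ]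
    (h : ∀ w, ‖charFun μ w 0‖ = 1) : ∃ c, ∀ᵐ x ∂μ, x.1 = c := by
  have hae := (ae_coe_char_eq_charFun (h 1)).and (ae_coe_char_eq_charFun (h (2 * Real.pi)))
  obtain ⟨x₀, hx₀⟩ := hae.exists
  refine ⟨x₀.1, hae.mono fun x hx => Circle.eq_of_exp_eq_of_exp_two_pi_mul_eq ?_ ?_⟩
  · simpa [char] using Circle.ext (hx.1.trans hx₀.1.symm)
  · simpa [char] using Circle.ext (hx.2.trans hx₀.2.symm)

lemma measure_setOf_fst_eq {μ : Measure XT} [IsProbabilityMeasure μ] {c : ℝ}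
    (h : ∀ᵐ x ∂μ, x.1 = c) : μ {x | x.1 = c} = 1 := by
  rw [← measure_univ (μ := μ)]
  exact (ae_iff_measure_eq
    (measurableSet_eq_fun measurable_fst measurable_const).nullMeasurableSet).mp h

lemma charFun_eq_of_ae_fst_eq {μ : Measure XT} {c : ℝ} (hc : ∀ᵐ x ∂μ, x.1 = c) (s : ℝ)
    (n : ℤ) : charFun μ s n = Circle.exp (s * c) * charFun μ 0 n := by
  rw [charFun, charFun, ← integral_const_mul]
  refine integral_congr_ae (hc.mono fun x hx => ?_)
  simp [char, hx]

lemma ae_fst_conv_dirac_neg_eq_zero {μ : Measure XT} [SFinite μ] {y : XT}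
    (hy : ∀ᵐ x ∂μ, x.1 = y.1) : ∀ᵐ x ∂(μ ∗ Measure.dirac (-y)), x.1 = 0 := by
  rw [Measure.conv_dirac, ae_map_iff (measurable_add_const _).aemeasurable
    (measurableSet_eq_fun measurable_fst measurable_const)]
  exact hy.mono fun x hx => by simp [hx]

lemma charFun_eq_char_mul_charFun_conv_dirac_neg {μ : Measure XT} [IsFiniteMeasure μ] {y : XT}
    (hy : ∀ᵐ x ∂μ, x.1 = y.1) (s : ℝ) (n : ℤ) :
    charFun μ s n = char s n y * charFun (μ ∗ Measure.dirac (-y)) 0 n := by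
  rw [charFun_conv, charFun_dirac, charFun_eq_of_ae_fst_eq hy, mul_left_comm, ← Circle.coe_mul,
    char_neg, char_mul_char, neg_zero, add_zero, add_neg_cancel]
  simp [char, mul_comm]

noncomputable def twoPointMeasure (κ : ℝ) : Measure XT :=
  ENNReal.ofReal ((1 + κ) / 2) • Measure.dirac 0 +
    ENNReal.ofReal ((1 - κ) / 2) • Measure.dirac (0, Additive.ofMul negOneCircle)
lemma twoPointMeasure_apply_eq_one {κ : ℝ} (hκ : |κ| ≤ 1) {S : Set XT} (h₀ : 0 ∈ S)
    (h₁ : (0, Additive.ofMul negOneCircle) ∈ S) : twoPointMeasure κ S = 1 := by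
  rw [abs_le] at hκ
  simp only [twoPointMeasure, Measure.add_apply, Measure.smul_apply,
    Measure.dirac_apply_of_mem h₀, Measure.dirac_apply_of_mem h₁, smul_eq_mul, mul_one]
  rw [← ENNReal.ofReal_add (by linarith) (by linarith), show (1 + κ) / 2 + (1 - κ) / 2 = 1 by ring,
    ENNReal.ofReal_one]

lemma isProbabilityMeasure_twoPointMeasure {κ : ℝ} (hκ : |κ| ≤ 1) :
    IsProbabilityMeasure (twoPointMeasure κ) :=
  ⟨twoPointMeasure_apply_eq_one hκ (Set.mem_univ _) (Set.mem_univ _)⟩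

lemma twoPointMeasure_setG {κ : ℝ} (hκ : |κ| ≤ 1) : twoPointMeasure κ setG = 1 :=
  twoPointMeasure_apply_eq_one hκ ⟨rfl, Or.inl rfl⟩ ⟨rfl, Or.inr rfl⟩

lemma charFun_twoPointMeasure {κ : ℝ} (hκ : |κ| ≤ 1) (s : ℝ) (n : ℤ) :
    charFun (twoPointMeasure κ) s n = if Even n then 1 else (κ : ℂ) := by
  rw [abs_le] at hκ
  have hint (x : XT) : Integrable (fun y => (char s n y : ℂ)) (Measure.dirac x) :=
    (charBCF s n).integrable _
  rw [charFun, twoPointMeasure, integral_add_measure ((hint _).smul_measure (by simp))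
    ((hint _).smul_measure (by simp)), integral_smul_measure, integral_smul_measure,
    integral_dirac, integral_dirac, ENNReal.toReal_ofReal (by linarith),
    ENNReal.toReal_ofReal (by linarith)]
  have hneg : ((negOneCircle : Circle) : ℂ) = -1 := rfl
  split_ifs with hn
  · simp [char, hneg, hn.neg_one_zpow]
    ring
  · simp [char, hneg, (Int.not_even_iff_odd.mp hn).neg_one_zpow]
    ring

lemma eq_conv_twoPointMeasure {ν₁ ν₂ : Measure XT} [IsProbabilityMeasure ν₁]
    [IsProbabilityMeasure ν₂] (h₁ : ∀ᵐ x ∂ν₁, x.1 = 0) (h₂ : ∀ᵐ x ∂ν₂, x.1 = 0) {κ : ℝ}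
    (hκ : |κ| ≤ 1) (h : ∀ n, charFun ν₂ 0 n = charFun ν₁ 0 n * if Even n then 1 else (κ : ℂ)) :
    ν₂ = ν₁ ∗ twoPointMeasure κ := by
  have := isProbabilityMeasure_twoPointMeasure hκ
  refine ext_of_charFun fun s n => ?_
  rw [charFun_conv, charFun_eq_of_ae_fst_eq h₂, charFun_eq_of_ae_fst_eq h₁,
    charFun_twoPointMeasure hκ, h n]
  simp

@[fun_prop]
lemma continuous_alphaXTinv (a b : ℝ) : Continuous (alphaXTinv a b) := by
  unfold alphaXTinv; fun_prop

def SymmetricJointLaw (a b : ℝ) (μ₁ μ₂ : Measure XT) : Prop :=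
  Measure.map (fun p : XT × XT => (p.1 + p.2, p.1 + alphaXTinv a b p.2)) (μ₁.prod μ₂) =
    Measure.map (fun p : XT × XT => (p.1 + p.2, -(p.1 + alphaXTinv a b p.2))) (μ₁.prod μ₂)

section Symmetry

variable {a b : ℝ} {μ₁ μ₂ : Measure XT}

lemma integral_char_add_mul_char_add_alphaXTinv [IsFiniteMeasure μ₁] [IsFiniteMeasure μ₂]
    (s u : ℝ) (n m : ℤ) :
    ∫ p : XT × XT, ((char s n (p.1 + p.2) * char u m (p.1 + alphaXTinv a b p.2) : Circle) : ℂ)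
        ∂(μ₁.prod μ₂) =
      charFun μ₁ (s + u) (n + m) * charFun μ₂ (s + a * u + b * m) (n - m) := by
  have key (x y : XT) : char s n (x + y) * char u m (x + alphaXTinv a b y) =
      char (s + u) (n + m) x * char (s + a * u + b * m) (n - m) y := by
    rw [char_add, char_add, char_alphaXTinv, mul_mul_mul_comm, char_mul_char, char_mul_char,
      add_assoc, ← sub_eq_add_neg]
  simp only [key, Circle.coe_mul]
  exact integral_prod_mul (fun x => (char _ _ x : ℂ)) (fun y => (char _ _ y : ℂ))

lemma charFun_mul_charFun_eq_of_symm [IsFiniteMeasure μ₁] [IsFiniteMeasure μ₂]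
    (hsym : SymmetricJointLaw a b μ₁ μ₂) (s u : ℝ) (n m : ℤ) :
    charFun μ₁ (s + u) (n + m) * charFun μ₂ (s + a * u + b * m) (n - m) =
      charFun μ₁ (s - u) (n - m) * charFun μ₂ (s - a * u - b * m) (n + m) := by
  have h := congrArg (fun ρ => ∫ q, ((char s n q.1 * char u m q.2 : Circle) : ℂ) ∂ρ) hsym
  have hf : Continuous fun q : XT × XT => ((char s n q.1 * char u m q.2 : Circle) : ℂ) :=
    continuous_subtype_val.comp
      (((continuous_char s n).comp continuous_fst).mul ((continuous_char u m).comp continuous_snd))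
  rw [integral_map (by fun_prop) hf.aestronglyMeasurable,
    integral_map (by fun_prop) hf.aestronglyMeasurable] at h
  simp only [char_neg] at h
  rw [integral_char_add_mul_char_add_alphaXTinv, integral_char_add_mul_char_add_alphaXTinv] at h
  convert h using 3 <;> push_cast <;> ring

lemma norm_charFun_fst_eq_one_of_symm [IsProbabilityMeasure μ₁] [IsProbabilityMeasure μ₂]
    (ha : 0 < a) (hsym : SymmetricJointLaw a b μ₁ μ₂) :
    (∀ w, ‖charFun μ₁ w 0‖ = 1) ∧ ∀ w, ‖charFun μ₂ w 0‖ = 1 := by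
  have key (u : ℝ) :
      charFun μ₁ (2 * u) 0 * charFun μ₂ ((1 + a) * u) 0 = charFun μ₂ ((1 - a) * u) 0 := by
    have h := charFun_mul_charFun_eq_of_symm hsym u u 0 0
    simp only [Int.cast_zero, mul_zero, add_zero, sub_zero, sub_self, charFun_zero_zero,
      one_mul] at h
    convert h using 3 <;> ring
  have hle (w : ℝ) : ‖charFun μ₂ ((1 - a) / (1 + a) * w) 0‖ ≤ ‖charFun μ₂ w 0‖ := by
    have h := key (w / (1 + a))
    rw [show (1 + a) * (w / (1 + a)) = w by field_simp,
      show (1 - a) * (w / (1 + a)) = (1 - a) / (1 + a) * w by ring] at h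
    rw [← h, norm_mul]
    exact mul_le_of_le_one_left (norm_nonneg _) (norm_charFun_le_one _ _ _)
  have hr : |(1 - a) / (1 + a)| < 1 := by
    rw [abs_div, abs_of_pos (by linarith : 0 < 1 + a), div_lt_one (by linarith), abs_lt]
    constructor <;> linarith
  have h₂ (w : ℝ) : ‖charFun μ₂ w 0‖ = 1 := by
    refine le_antisymm (norm_charFun_le_one _ _ _) ?_
    simpa [charFun_zero_zero] using apply_zero_le_of_apply_smul_le
      (continuous_charFun_fst μ₂ 0).norm hr hle w
  refine ⟨fun w => ?_, h₂⟩
  have h := congrArg norm (key (w / 2))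
  rwa [mul_div_cancel₀ w two_ne_zero, norm_mul, h₂, h₂, mul_one] at h

/-- The circle coordinate `e^{i b c₂}` of the recentring point of `μ₂` is what makes the
character factors on the two sides of the symmetry identity agree. -/
lemma parity_relation_charFun_conv_dirac_neg_of_symm [IsFiniteMeasure μ₁] [IsFiniteMeasure μ₂]
    (hsym : SymmetricJointLaw a b μ₁ μ₂) {c₁ c₂ : ℝ} (hc₁ : ∀ᵐ x ∂μ₁, x.1 = c₁)
    (hc₂ : ∀ᵐ x ∂μ₂, x.1 = c₂) {p q : ℤ} (hpq : Even (p - q)) :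
    let g := charFun (μ₁ ∗ Measure.dirac (-(c₁, 0))) 0
    let h := charFun (μ₂ ∗ Measure.dirac (-(c₂, Additive.ofMul (Circle.exp (b * c₂))))) 0
    g p * h q = g q * h p := by
  obtain ⟨l, hl⟩ := hpq
  have key := charFun_mul_charFun_eq_of_symm hsym 0 0 (q + l) l
  simp only [charFun_eq_char_mul_charFun_conv_dirac_neg (y := (c₁, 0)) hc₁,
    charFun_eq_char_mul_charFun_conv_dirac_neg
      (y := (c₂, Additive.ofMul (Circle.exp (b * c₂)))) hc₂, char_mk_exp] at key
  rw [show q + l + l = p by omega, show q + l - l = q by omega,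
    show (0 - a * 0 - b * l + b * p) * c₂ = (0 + a * 0 + b * l + b * q) * c₂ by
      push_cast [show p = q + l + l by omega]; ring] at key
  simp only [char, add_zero, sub_zero, mul_zero, zero_mul, Circle.exp_zero, toMul_zero, one_zpow,
    mul_one, Circle.coe_one, one_mul] at key
  exact mul_left_cancel₀ (Circle.coe_ne_zero _) (by linear_combination key)

end Symmetry

end XT

open XT

/-- Case `a > 0` for `α(t,z) = (a·t, e^{i·b·t}·z⁻¹)` on `ℝ × 𝕋`: shifts of the
distributions are concentrated on `{0} × 𝕋` and one is a factor of the other by a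
measure on `G`. -/
theorem heyde_R_T_inversion_pos_a (a b : ℝ) (ha : 0 < a)
    (μ₁ μ₂ : Measure XT) [IsProbabilityMeasure μ₁] [IsProbabilityMeasure μ₂]
    (hsym :
      Measure.map (fun p : XT × XT => (p.1 + p.2, p.1 + alphaXTinv a b p.2))
          (μ₁.prod μ₂) =
        Measure.map (fun p : XT × XT => (p.1 + p.2, -(p.1 + alphaXTinv a b p.2)))
          (μ₁.prod μ₂)) :
    ∃ x₁ x₂ : XT,
      Measure.conv μ₁ (Measure.dirac (-x₁)) {x : XT | x.1 = 0} = 1 ∧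
      Measure.conv μ₂ (Measure.dirac (-x₂)) {x : XT | x.1 = 0} = 1 ∧
      ∃ ω : Measure XT, IsProbabilityMeasure ω ∧ ω setG = 1 ∧
        (Measure.conv μ₂ (Measure.dirac (-x₂)) =
            Measure.conv (Measure.conv μ₁ (Measure.dirac (-x₁))) ω ∨
          Measure.conv μ₁ (Measure.dirac (-x₁)) =
            Measure.conv (Measure.conv μ₂ (Measure.dirac (-x₂))) ω) := by
  obtain ⟨hnorm₁, hnorm₂⟩ := norm_charFun_fst_eq_one_of_symm ha hsym
  obtain ⟨c₁, hc₁⟩ := exists_ae_fst_eq_of_norm_charFun_eq_one hnorm₁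
  obtain ⟨c₂, hc₂⟩ := exists_ae_fst_eq_of_norm_charFun_eq_one hnorm₂
  let x₁ : XT := (c₁, 0)
  let x₂ : XT := (c₂, Additive.ofMul (Circle.exp (b * c₂)))
  have hconc₁ := ae_fst_conv_dirac_neg_eq_zero (y := x₁) hc₁
  have hconc₂ := ae_fst_conv_dirac_neg_eq_zero (y := x₂) hc₂
  have hconj (ν : Measure XT) (n : ℤ) : charFun ν 0 (-n) = starRingEnd ℂ (charFun ν 0 n) := by
    simpa using charFun_neg_neg ν 0 n
  obtain ⟨κ, hκ, hfactor⟩ := exists_abs_le_one_of_parity_relation (charFun_zero_zero _)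
    (charFun_zero_zero _) (hconj _) (hconj _)
    fun _ _ => parity_relation_charFun_conv_dirac_neg_of_symm hsym hc₁ hc₂
  refine ⟨x₁, x₂, measure_setOf_fst_eq hconc₁, measure_setOf_fst_eq hconc₂, twoPointMeasure κ,
    isProbabilityMeasure_twoPointMeasure hκ, twoPointMeasure_setG hκ, ?_⟩
  exact hfactor.imp (eq_conv_twoPointMeasure hconc₁ hconc₂ hκ)
    (eq_conv_twoPointMeasure hconc₂ hconc₁ hκ)
end

section
/- Let X be a second-countable locally compact Hausdorff Abelian topological group (with its Borel σ-algebra), let G be a Borel-measurable subgroup of X, and let μ, μ_1, μ_2 be probability measures on X such that μ(G) = 1 and μ = μ_1 * μ_2. Then there exists x ∈ X such that (μ_1 * δ_x)(G) = 1 and (μ_2 * δ_{−x})(G) = 1; that is, suitable shifts of μ_1 and μ_2 are concentrated on G. -/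
/-!
By Fubini, `μ₁ ∗ μ₂ (G) = 1` says that for `μ₁`-almost every `a` the coset `-a + G` has full
`μ₂`-measure. Two cosets of full measure meet, hence coincide; so, fixing one such `a₀`,
almost every `a` lies in `a₀ + G`, and the shifts by `-a₀` and `a₀` do the job.
-/

open MeasureTheory

namespace MeasureTheory.Measure

variable {X : Type*} [AddCommGroup X] [MeasurableSpace X]

theorem ae_ae_add_of_ae_conv [MeasurableAdd₂ X] {μ ν : Measure X} [SFinite ν]
    {p : X → Prop} (h : ∀ᵐ z ∂(μ ∗ ν), p z) : ∀ᵐ x ∂μ, ∀ᵐ y ∂ν, p (x + y) :=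
  ae_ae_of_ae_prod (ae_of_ae_map (by fun_prop) h)

theorem conv_dirac_apply_eq_one_iff [MeasurableAdd₂ X] {ν : Measure X}
    [IsProbabilityMeasure ν] {s : Set X} (hs : MeasurableSet s) (x : X) :
    (ν ∗ dirac x) s = 1 ↔ ∀ᵐ a ∂ν, a + x ∈ s := by
  rw [conv_dirac, map_apply (measurable_add_const x) hs,
    ← mem_ae_iff_prob_eq_one (measurable_add_const x hs)]
  rfl

end MeasureTheory.Measure

theorem AddSubgroup.sub_mem_of_ae_add_mem {X : Type*} [AddCommGroup X] [MeasurableSpace X]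
    {G : AddSubgroup X} {ν : Measure X} [NeZero ν] {a a' : X}
    (ha : ∀ᵐ b ∂ν, a + b ∈ G) (ha' : ∀ᵐ b ∂ν, a' + b ∈ G) : a - a' ∈ G := by
  obtain ⟨b, hb, hb'⟩ := (ha.and ha').exists
  simpa using G.sub_mem hb hb'

theorem shifts_of_factors_concentrated_on_subgroup_general (X : Type*) [AddCommGroup X]
    [TopologicalSpace X] [IsTopologicalAddGroup X]
    [SecondCountableTopology X] [MeasurableSpace X] [BorelSpace X]
    (G : AddSubgroup X) (hG : MeasurableSet (G : Set X))
    (μ μ₁ μ₂ : Measure X) [IsProbabilityMeasure μ₁]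
    [IsProbabilityMeasure μ₂]
    (hμG : μ (G : Set X) = 1) (hconv : μ = Measure.conv μ₁ μ₂) :
    ∃ x : X,
      Measure.conv μ₁ (Measure.dirac x) (G : Set X) = 1 ∧
      Measure.conv μ₂ (Measure.dirac (-x)) (G : Set X) = 1 := by
  subst hconv
  have hfib : ∀ᵐ a ∂μ₁, ∀ᵐ b ∂μ₂, a + b ∈ G :=
    Measure.ae_ae_add_of_ae_conv ((mem_ae_iff_prob_eq_one hG).2 hμG)
  obtain ⟨a₀, ha₀⟩ := hfib.exists
  refine ⟨-a₀, (Measure.conv_dirac_apply_eq_one_iff hG _).2 ?_,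
    (Measure.conv_dirac_apply_eq_one_iff hG _).2 ?_⟩
  · filter_upwards [hfib] with a ha
    simpa [sub_eq_add_neg] using G.sub_mem_of_ae_add_mem ha ha₀
  · simpa [add_comm] using ha₀

/-- Lemma 2.3: if a probability measure `μ` concentrated on a Borel subgroup `G` of a
second-countable locally compact Abelian group `X` factors as `μ = μ₁ ∗ μ₂`, then
suitable shifts of `μ₁` and `μ₂` are concentrated on `G`. -/
theorem shifts_of_factors_concentrated_on_subgroup (X : Type*) [AddCommGroup X]
    [TopologicalSpace X] [IsTopologicalAddGroup X] [LocallyCompactSpace X] [T2Space X]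
    [SecondCountableTopology X] [MeasurableSpace X] [BorelSpace X]
    (G : AddSubgroup X) (hG : MeasurableSet (G : Set X))
    (μ μ₁ μ₂ : Measure X) [IsProbabilityMeasure μ] [IsProbabilityMeasure μ₁]
    [IsProbabilityMeasure μ₂]
    (hμG : μ (G : Set X) = 1) (hconv : μ = Measure.conv μ₁ μ₂) :
    ∃ x : X,
      Measure.conv μ₁ (Measure.dirac x) (G : Set X) = 1 ∧
      Measure.conv μ₂ (Measure.dirac (-x)) (G : Set X) = 1 :=
  shifts_of_factors_concentrated_on_subgroup_general X G hG μ μ₁ μ₂ hμG hconv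
end
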